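/- arXiv:2306.09584 — 8 statements merged into one kernel-verified Lean document; each statement's English description precedes it below -/
import Mathlib

section
/- Let f: ℝ → ℝ be a continuous function with f(x) → +∞ as x → +∞ and f(x) → -∞ as x → -∞. Define F(y) = sup_{x ≤ y} f(x). Then for every y ∈ ℝ, inf_{x ≥ y} (2F(x) - f(x)) = F(y). -/
/-!
Since `f ≤ F` and `F` is monotone, `2 F x - f x ≥ F x ≥ F y` for `x ≥ y`. The bound is
attained at the first point `z ≥ y` where `f` climbs back to the level `F y` (it does, as
`f → +∞`): on `[y, z)` the function stays below `F y`, so `F z = F y = f z` and `2 F z - f z = F y`.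
-/

open Filter Set

def runningSup {α β : Type*} [Preorder α] [SupSet β] (f : α → β) (y : α) : β :=
  sSup (f '' Iic y)

section RunningSup

variable {α β : Type*} [LinearOrder α] [ConditionallyCompleteLattice β] {f : α → β}

theorem le_runningSup (hf : ∀ b, BddAbove (f '' Iic b)) (x : α) : f x ≤ runningSup f x :=
  le_csSup (hf x) (mem_image_of_mem f self_mem_Iic)

theorem monotone_runningSup (hf : ∀ b, BddAbove (f '' Iic b)) : Monotone (runningSup f) :=
  fun _ b hab =>
    csSup_le_csSup (hf b) (nonempty_Iic.image f) (image_mono (Iic_subset_Iic.mpr hab))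

theorem runningSup_le_of_forall_Ioc {y z : α} (hy : BddAbove (f '' Iic y))
    (h : ∀ x ∈ Ioc y z, f x ≤ runningSup f y) : runningSup f z ≤ runningSup f y := by
  refine csSup_le (nonempty_Iic.image f) ?_
  rintro _ ⟨x, hxz, rfl⟩
  rcases le_or_gt x y with hxy | hxy
  · exact le_csSup hy (mem_image_of_mem f hxy)
  · exact h x ⟨hxy, hxz⟩

end RunningSup

section Continuous

variable {α β : Type*} [ConditionallyCompleteLinearOrder α] [TopologicalSpace α]
  [OrderTopology α] [LinearOrder β] [TopologicalSpace β] [OrderClosedTopology β] {f : α → β}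

theorem Continuous.bddAbove_image_Iic_of_tendsto_atBot (hf : Continuous f)
    (hbot : Tendsto f atBot atBot) (b : α) : BddAbove (f '' Iic b) := by
  obtain ⟨c, hc⟩ := eventually_atBot.mp (hbot.eventually_le_atBot (f b))
  have : Nonempty β := ⟨f b⟩
  have hIcc : BddAbove (f '' Icc c b) := (isCompact_Icc.image hf).bddAbove
  refine ((bddAbove_Iic (a := f b)).union hIcc).mono ?_
  rintro _ ⟨x, hxb, rfl⟩
  rcases le_or_gt x c with hxc | hxc
  · exact Or.inl (hc x hxc)
  · exact Or.inr ⟨x, ⟨hxc.le, hxb⟩, rfl⟩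

theorem Continuous.exists_first_eq_of_tendsto_atTop [DenselyOrdered α] (hf : Continuous f)
    (htop : Tendsto f atTop atTop) {y : α} {c : β} (hy : f y ≤ c) :
    ∃ z, y ≤ z ∧ f z = c ∧ ∀ x ∈ Ico y z, f x < c := by
  obtain ⟨b, hb⟩ := eventually_atTop.mp (htop.eventually_ge_atTop c)
  set T := Ici y ∩ {x | c ≤ f x}
  have hT_bdd : BddBelow T := ⟨y, fun x hx => hx.1⟩
  have hzT : sInf T ∈ T :=
    (isClosed_Ici.inter (isClosed_le continuous_const hf)).csInf_mem
      ⟨max b y, le_max_right b y, hb _ (le_max_left b y)⟩ hT_bdd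
  have below : ∀ x ∈ Ico y (sInf T), f x < c := fun x hx =>
    lt_of_not_ge fun hcx => (csInf_le hT_bdd ⟨hx.1, hcx⟩).not_gt hx.2
  refine ⟨sInf T, hzT.1, le_antisymm (not_lt.mp fun hc => ?_) hzT.2, below⟩
  -- an overshoot `c < f z` would give a crossing of level `c` inside `[y, z)`
  obtain ⟨x, hx, hfx⟩ := intermediate_value_Icc hzT.1 hf.continuousOn ⟨hy, hc.le⟩
  rcases hx.2.lt_or_eq with hxz | rfl
  · exact (below x ⟨hx.1, hxz⟩).ne hfx
  · exact hc.ne' hfx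

end Continuous

theorem exists_ge_eq_runningSup {α β : Type*} [ConditionallyCompleteLinearOrder α]
    [TopologicalSpace α] [OrderTopology α] [DenselyOrdered α]
    [ConditionallyCompleteLinearOrder β] [TopologicalSpace β] [OrderClosedTopology β] {f : α → β}
    (hf : Continuous f) (htop : Tendsto f atTop atTop) (hbdd : ∀ b, BddAbove (f '' Iic b))
    (y : α) :
    ∃ z, y ≤ z ∧ f z = runningSup f y ∧ runningSup f z = runningSup f y := by
  obtain ⟨z, hyz, hfz, below⟩ :=
    hf.exists_first_eq_of_tendsto_atTop htop (le_runningSup hbdd y)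
  refine ⟨z, hyz, hfz, le_antisymm ?_ (monotone_runningSup hbdd hyz)⟩
  refine runningSup_le_of_forall_Ioc (hbdd y) fun x hx => ?_
  rcases hx.2.lt_or_eq with hxz | rfl
  · exact (below x ⟨hx.1.le, hxz⟩).le
  · exact hfz.le

/-- For continuous `f : ℝ → ℝ` with `f → +∞` at `+∞` and `f → -∞` at `-∞`,
setting `F y = sup_{x ≤ y} f x`, we have `inf_{x ≥ y} (2 F x - f x) = F y` for every `y`. -/
theorem stmt0 (f : ℝ → ℝ) (hf : Continuous f)
    (htop : Tendsto f atTop atTop) (hbot : Tendsto f atBot atBot)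
    (F : ℝ → ℝ) (hF : ∀ y, F y = sSup (f '' Set.Iic y)) (y : ℝ) :
    sInf ((fun x => 2 * F x - f x) '' Set.Ici y) = F y := by
  obtain rfl : F = runningSup f := funext hF
  have hbdd := hf.bddAbove_image_Iic_of_tendsto_atBot hbot
  obtain ⟨z, hyz, hfz, hFz⟩ := exists_ge_eq_runningSup hf htop hbdd y
  refine IsLeast.csInf_eq ⟨⟨z, hyz, show 2 * _ - _ = _ by rw [hFz, hfz]; ring⟩, ?_⟩
  rintro _ ⟨x, hyx, rfl⟩
  linarith [monotone_runningSup hbdd hyx, le_runningSup hbdd x]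
end

section
/- Let f, g: ℝ → ℝ be continuous functions with f(x) ∨ g(x) → -∞ as x → ±∞, and suppose f(y) - f(x) ≤ g(y) - g(x) for all x < y. Let x_f^R and x_g^R denote the rightmost maximizers of f and g respectively over ℝ, and x_f^L, x_g^L the leftmost maximizers. Then x_f^L ≤ x_g^L and x_f^R ≤ x_g^R. -/
open Filter

/-- If `f, g` are continuous with `f ∨ g → -∞` at `±∞` and `f ≤_inc g`,
then the leftmost and rightmost maximizers satisfy `x_f^L ≤ x_g^L` and `x_f^R ≤ x_g^R`. -/
theorem stmt2 (f g : ℝ → ℝ) (hf : Continuous f) (hg : Continuous g)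
    (hdecayTop : Tendsto (fun x => max (f x) (g x)) atTop atBot)
    (hdecayBot : Tendsto (fun x => max (f x) (g x)) atBot atBot)
    (hinc : ∀ x y : ℝ, x < y → f y - f x ≤ g y - g x)
    (xfL xfR xgL xgR : ℝ)
    (hfL : IsMaxOn f Set.univ xfL ∧ ∀ z, IsMaxOn f Set.univ z → xfL ≤ z)
    (hfR : IsMaxOn f Set.univ xfR ∧ ∀ z, IsMaxOn f Set.univ z → z ≤ xfR)
    (hgL : IsMaxOn g Set.univ xgL ∧ ∀ z, IsMaxOn g Set.univ z → xgL ≤ z)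
    (hgR : IsMaxOn g Set.univ xgR ∧ ∀ z, IsMaxOn g Set.univ z → z ≤ xgR) :
    xfL ≤ xgL ∧ xfR ≤ xgR := by
  constructor
  · by_contra h
    push_neg at h
    have h1 : f xfL - f xgL ≤ g xfL - g xgL := hinc xgL xfL h
    have h2 : g xfL ≤ g xgL := hgL.1 (Set.mem_univ xfL)
    have h3 : f xfL ≤ f xgL := by linarith
    have h4 : IsMaxOn f Set.univ xgL := fun y _ => le_trans (hfL.1 (Set.mem_univ y)) h3
    exact absurd (hfL.2 xgL h4) (not_le.mpr h)
  · by_contra h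
    push_neg at h
    have h1 : f xfR - f xgR ≤ g xfR - g xgR := hinc xgR xfR h
    have h2 : f xgR ≤ f xfR := hfR.1 (Set.mem_univ xgR)
    have h3 : g xgR ≤ g xfR := by linarith
    have h4 : IsMaxOn g Set.univ xfR := fun y _ => le_trans (hgR.1 (Set.mem_univ y)) h3
    exact absurd (hgR.2 xfR h4) (not_le.mpr h)
end

section
/- Let Z, B: ℝ → ℝ be continuous functions with limsup_{x → -∞} (Z(x) - B(x)) = -∞. Define D(Z,B)(y) = Z(y) + Q(y) - Q(0) where Q(y) = sup_{x ≤ y} (B(x) - B(y) - Z(x) + Z(y)). Then for all x < y, D(Z,B)(y) - D(Z,B)(x) = B(y) - B(x) + (sup_{x ≤ u ≤ y}{Z(u) - Z(x) - B(u) + B(x)} - sup_{u ≤ x}{Z(u) - Z(x) - B(u) + B(x)})⁺, and D(Z,B) is continuous. -/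
open Filter

section Aux
variable (g : ℝ → ℝ)

lemma bdd_iic (hg : Continuous g) (hlim : Tendsto g atBot atBot) (y : ℝ) :
    BddAbove (g '' Set.Iic y) := by
  obtain ⟨a, ha⟩ := eventually_atBot.1 (hlim.eventually (eventually_le_atBot 0))
  obtain ⟨C, hC⟩ := (isCompact_Icc.image_of_continuousOn
    (hg.continuousOn : ContinuousOn g (Set.Icc (min a y) y))).bddAbove
  refine ⟨max C 0, ?_⟩
  rintro _ ⟨x, hx, rfl⟩
  rcases le_or_gt x a with h | h
  · exact le_max_of_le_right (ha x h)
  · exact le_max_of_le_left (hC ⟨x, ⟨le_trans (min_le_left _ _) h.le, hx⟩, rfl⟩)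

lemma sSup_sub_const (s : Set ℝ) (hs : s.Nonempty) (hb : BddAbove s) (c : ℝ) :
    sSup ((fun t => t - c) '' s) = sSup s - c := by
  apply le_antisymm
  · refine csSup_le (hs.image _) ?_
    rintro _ ⟨t, ht, rfl⟩
    have := le_csSup hb ht; beta_reduce; linarith
  · obtain ⟨b, hbub⟩ := hb
    have hb' : BddAbove ((fun t => t - c) '' s) := by
      refine ⟨b - c, ?_⟩; rintro _ ⟨t, ht, rfl⟩
      have := hbub ht; simp; linarith
    rw [sub_le_iff_le_add]
    refine csSup_le hs fun t ht => ?_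
    have := le_csSup hb' ⟨t, ht, rfl⟩; beta_reduce at this; linarith

lemma M_eq_max (hg : Continuous g) (hlim : Tendsto g atBot atBot) {x y : ℝ} (hxy : x ≤ y) :
    sSup (g '' Set.Iic y) = max (sSup (g '' Set.Iic x)) (sSup (g '' Set.Icc x y)) := by
  have h1 : Set.Iic y = Set.Iic x ∪ Set.Icc x y := (Set.Iic_union_Icc_eq_Iic hxy).symm
  rw [h1, Set.image_union, csSup_union (bdd_iic g hg hlim x) ⟨g x, ⟨x, le_refl x, rfl⟩⟩
    ((isCompact_Icc.image_of_continuousOn hg.continuousOn).bddAbove)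
    ⟨g x, ⟨x, ⟨le_refl x, hxy⟩, rfl⟩⟩]

lemma M_cont (hg : Continuous g) (hlim : Tendsto g atBot atBot) :
    Continuous (fun y => sSup (g '' Set.Iic y)) := by
  rw [Metric.continuous_iff]
  intro y0 ε hε
  obtain ⟨δ, hδ, hδ'⟩ := Metric.continuous_iff.1 hg y0 (ε/3) (by linarith)
  refine ⟨δ, hδ, fun y hy => ?_⟩
  have key : ∀ u ∈ Set.Icc (min y y0) (max y y0), g u ≤ g y0 + ε/3 := by
    intro u hu
    have : dist u y0 < δ := by
      rw [Real.dist_eq, abs_lt]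
      rw [Real.dist_eq, abs_lt] at hy
      rcases le_total y y0 with h | h
      · simp [min_eq_left h, max_eq_right h] at hu
        constructor <;> linarith [hu.1, hu.2]
      · simp [min_eq_right h, max_eq_left h] at hu
        constructor <;> linarith [hu.1, hu.2]
    have := hδ' u this
    rw [Real.dist_eq, abs_lt] at this
    linarith [this.1, this.2]
  rcases le_total y y0 with h | h
  · -- y ≤ y0
    have hmax := M_eq_max g hg hlim h
    have hS : sSup (g '' Set.Icc y y0) ≤ g y0 + ε/3 := by
      refine csSup_le ⟨g y, ⟨y, ⟨le_refl y, h⟩, rfl⟩⟩ ?_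
      rintro _ ⟨u, hu, rfl⟩
      exact key u (by simpa [min_eq_left h, max_eq_right h] using hu)
    have hgy0 : g y0 ≤ g y + ε/3 := by
      have := hδ' y hy; rw [Real.dist_eq, abs_lt] at this; linarith [this.1]
    have hgyM : g y ≤ sSup (g '' Set.Iic y) := le_csSup (bdd_iic g hg hlim y) ⟨y, le_refl y, rfl⟩
    have hmono : sSup (g '' Set.Iic y) ≤ sSup (g '' Set.Iic y0) := by
      rw [hmax]; exact le_max_left _ _
    rw [Real.dist_eq, abs_lt]
    constructor
    · rw [hmax]
      have : sSup (g '' Set.Icc y y0) ≤ sSup (g '' Set.Iic y) + 2*ε/3 := by linarith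
      have := max_le (le_add_of_nonneg_right (by linarith) :
        sSup (g '' Set.Iic y) ≤ sSup (g '' Set.Iic y) + 2*ε/3) this
      linarith
    · linarith
  · -- y0 ≤ y
    have hmax := M_eq_max g hg hlim h
    have hS : sSup (g '' Set.Icc y0 y) ≤ g y0 + ε/3 := by
      refine csSup_le ⟨g y, ⟨y, ⟨h, le_refl y⟩, rfl⟩⟩ ?_
      rintro _ ⟨u, hu, rfl⟩
      exact key u (by simpa [min_eq_right h, max_eq_left h] using hu)
    have hgyM : g y0 ≤ sSup (g '' Set.Iic y0) :=
      le_csSup (bdd_iic g hg hlim y0) ⟨y0, le_refl y0, rfl⟩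
    have hmono : sSup (g '' Set.Iic y0) ≤ sSup (g '' Set.Iic y) := by
      rw [hmax]; exact le_max_left _ _
    rw [Real.dist_eq, abs_lt]
    constructor
    · linarith
    · rw [hmax]
      have : sSup (g '' Set.Icc y0 y) ≤ sSup (g '' Set.Iic y0) + ε/3 := by linarith
      have := max_le (le_add_of_nonneg_right (by linarith) :
        sSup (g '' Set.Iic y0) ≤ sSup (g '' Set.Iic y0) + ε/3) this
      linarith

end Aux

/-- Queue length: `Q(Z,B)(y) = sup_{x ≤ y} [(B(y)-B(x)) - (Z(y)-Z(x))]`. -/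
noncomputable def Qmap (Z B : ℝ → ℝ) (y : ℝ) : ℝ :=
  sSup ((fun x => (B y - B x) - (Z y - Z x)) '' Set.Iic y)

/-- Departure map: `D(Z,B)(y) = Z(y) + Q(Z,B)(y) - Q(Z,B)(0)`. -/
noncomputable def Dmap (Z B : ℝ → ℝ) (y : ℝ) : ℝ :=
  Z y + Qmap Z B y - Qmap Z B 0

/-- For continuous `Z, B` with `Z - B → -∞` at `-∞`, the increments of `D(Z,B)`
have the stated representation and `D(Z,B)` is continuous. -/
theorem stmt4 (Z B : ℝ → ℝ) (hZ : Continuous Z) (hB : Continuous B)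
    (hlim : Tendsto (fun x => Z x - B x) atBot atBot) :
    (∀ x y : ℝ, x < y →
      Dmap Z B y - Dmap Z B x = B y - B x +
        max (sSup ((fun u => (Z u - Z x) - (B u - B x)) '' Set.Icc x y)
              - sSup ((fun u => (Z u - Z x) - (B u - B x)) '' Set.Iic x)) 0) ∧
    Continuous (Dmap Z B) := by
  set g : ℝ → ℝ := fun x => Z x - B x with hgdef
  have hg : Continuous g := hZ.sub hB
  have hQ : ∀ y, Qmap Z B y = sSup (g '' Set.Iic y) - g y := by
    intro y
    have himg : (fun x => (B y - B x) - (Z y - Z x)) '' Set.Iic y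
        = (fun t => t - g y) '' (g '' Set.Iic y) := by
      rw [Set.image_image]
      apply Set.image_congr'
      intro u; simp only [hgdef]; ring
    rw [Qmap, himg, sSup_sub_const (g '' Set.Iic y) ⟨g y, ⟨y, le_refl y, rfl⟩⟩ (bdd_iic g hg hlim y)]
  have hD : ∀ y, Dmap Z B y =
      B y + sSup (g '' Set.Iic y) - sSup (g '' Set.Iic 0) + g 0 := by
    intro y
    rw [Dmap, hQ, hQ]
    simp only [hgdef]; ring
  constructor
  · intro x y hxy
    have hM := M_eq_max g hg hlim hxy.le
    have hIcc : sSup ((fun u => (Z u - Z x) - (B u - B x)) '' Set.Icc x y)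
        = sSup (g '' Set.Icc x y) - g x := by
      have himg : (fun u => (Z u - Z x) - (B u - B x)) '' Set.Icc x y
          = (fun t => t - g x) '' (g '' Set.Icc x y) := by
        rw [Set.image_image]
        apply Set.image_congr'
        intro u; simp only [hgdef]; ring
      rw [himg, sSup_sub_const (g '' Set.Icc x y) ⟨g x, ⟨x, ⟨le_refl x, hxy.le⟩, rfl⟩⟩
        (isCompact_Icc.image_of_continuousOn hg.continuousOn).bddAbove]
    have hIic : sSup ((fun u => (Z u - Z x) - (B u - B x)) '' Set.Iic x)
        = sSup (g '' Set.Iic x) - g x := by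
      have himg : (fun u => (Z u - Z x) - (B u - B x)) '' Set.Iic x
          = (fun t => t - g x) '' (g '' Set.Iic x) := by
        rw [Set.image_image]
        apply Set.image_congr'
        intro u; simp only [hgdef]; ring
      rw [himg, sSup_sub_const (g '' Set.Iic x) ⟨g x, ⟨x, le_refl x, rfl⟩⟩ (bdd_iic g hg hlim x)]
    rw [hD, hD, hIcc, hIic, hM]
    have e1 : sSup (g '' Set.Icc x y) - g x - (sSup (g '' Set.Iic x) - g x)
        = sSup (g '' Set.Icc x y) - sSup (g '' Set.Iic x) := by ring
    rw [e1]
    have e2 : max (sSup (g '' Set.Iic x)) (sSup (g '' Set.Icc x y)) - sSup (g '' Set.Iic x)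
        = max (sSup (g '' Set.Icc x y) - sSup (g '' Set.Iic x)) 0 := by
      rcases le_total (sSup (g '' Set.Iic x)) (sSup (g '' Set.Icc x y)) with h | h
      · rw [max_eq_right h, max_eq_left (by linarith : (0:ℝ) ≤ sSup (g '' Set.Icc x y) - sSup (g '' Set.Iic x))]
      · rw [max_eq_left h, max_eq_right (by linarith : sSup (g '' Set.Icc x y) - sSup (g '' Set.Iic x) ≤ (0:ℝ))]
        ring
    linarith [e2]
  · have : Dmap Z B = fun y => B y + sSup (g '' Set.Iic y) - sSup (g '' Set.Iic 0) + g 0 :=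
      funext hD
    rw [this]
    exact ((hB.add (M_cont g hg hlim)).sub continuous_const).add continuous_const
end

section
/- Let Z, Z', B: ℝ → ℝ be continuous with Z(0) = Z'(0) = B(0) = 0, suppose Z(y) - Z(x) ≤ Z'(y) - Z'(x) for all x < y, and suppose limsup_{x → -∞} (Z(x) - B(x)) = -∞. Then B ≤_inc D(Z,B) ≤_inc D(Z',B), i.e., for all x < y, B(y) - B(x) ≤ D(Z,B)(y) - D(Z,B)(x) ≤ D(Z',B)(y) - D(Z',B)(x). -/
/-!
Writing `f = B - Z`, the queue is `Q(Z,B)(y) = f y - inf_{x ≤ y} f x`, so up to an additive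
constant `D(Z,B)` is `B` minus the running infimum of `B - Z`. A running infimum is
nonincreasing, which gives `B ≤_inc D(Z,B)`. Passing from `Z` to `Z'` adds to `B - Z` the
nonincreasing function `Z - Z'`; on `[x, y]` this can only make the running infimum drop
further, which gives `D(Z,B) ≤_inc D(Z',B)`.
-/

open Filter

open Set

theorem bddBelow_image_Iic_of_tendsto_atBot_atTop {α β : Type*} [LinearOrder α]
    [TopologicalSpace α] [CompactIccSpace α] [LinearOrder β] [TopologicalSpace β]
    [ClosedIicTopology β] {f : α → β} (hf : Continuous f) (h : Tendsto f atBot atTop) (y : α) :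
    BddBelow (f '' Iic y) := by
  have : Nonempty α := ⟨y⟩
  have : Nonempty β := ⟨f y⟩
  obtain ⟨R, hR⟩ := eventually_atBot.mp (h.eventually_ge_atTop (f y))
  have hfar : BddBelow (f '' Iic R) := ⟨f y, forall_mem_image.2 hR⟩
  have hnear : BddBelow (f '' Icc R y) := isCompact_Icc.bddBelow_image hf.continuousOn
  refine (hfar.union hnear).mono ?_
  rw [← image_union]
  exact image_mono Iic_subset_Iic_union_Icc

section RunningInf

variable {α : Type*} [LinearOrder α] {f g : α → ℝ} {x y : α}

noncomputable def runningInf (f : α → ℝ) (y : α) : ℝ :=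
  sInf (f '' Iic y)

theorem runningInf_le (hf : BddBelow (f '' Iic y)) (hxy : x ≤ y) : runningInf f y ≤ f x :=
  csInf_le hf (mem_image_of_mem f hxy)

theorem runningInf_anti (hf : BddBelow (f '' Iic y)) (hxy : x ≤ y) :
    runningInf f y ≤ runningInf f x :=
  csInf_le_csInf hf (nonempty_Iic.image f) (image_mono (Iic_subset_Iic.mpr hxy))

theorem le_runningInf {c : ℝ} (h : ∀ x ≤ y, c ≤ f x) : c ≤ runningInf f y :=
  le_csInf (nonempty_Iic.image f) (forall_mem_image.2 h)

theorem bddBelow_image_Iic_of_antitone_sub (hf : BddBelow (f '' Iic y)) (hgf : Antitone (g - f)) :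
    BddBelow (g '' Iic y) := by
  obtain ⟨c, hc⟩ := hf
  refine ⟨c + (g y - f y), forall_mem_image.2 fun x hx => ?_⟩
  have hfx : c ≤ f x := hc (mem_image_of_mem f hx)
  have hgfx : (g - f) y ≤ (g - f) x := hgf hx
  simp only [Pi.sub_apply] at hgfx
  linarith

theorem runningInf_sub_runningInf_le_of_antitone_sub (hgf : Antitone (g - f))
    (hf : BddBelow (f '' Iic x)) (hg : BddBelow (g '' Iic y)) (hxy : x ≤ y) :
    runningInf f x - runningInf f y ≤ runningInf g x - runningInf g y := by
  suffices h : runningInf g y - runningInf g x + runningInf f x ≤ runningInf f y by linarith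
  refine le_runningInf fun w hw => ?_
  rcases le_total w x with hwx | hxw
  · linarith [runningInf_le hf hwx, runningInf_anti hg hxy]
  · -- for `u ≤ x ≤ w`: `g u ≥ f u + (g - f) w ≥ runningInf f x + (g - f) w`
    have hgx : runningInf f x + (g w - f w) ≤ runningInf g x := by
      refine le_runningInf fun u hu => ?_
      have hgfu : (g - f) w ≤ (g - f) u := hgf (hu.trans hxw)
      simp only [Pi.sub_apply] at hgfu
      linarith [runningInf_le hf hu]
    linarith [runningInf_le hg hw]

end RunningInf

theorem Qmap_eq_sub_runningInf (Z B : ℝ → ℝ) (y : ℝ) (h : BddBelow ((B - Z) '' Iic y)) :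
    Qmap Z B y = (B - Z) y - runningInf (B - Z) y := by
  have himage : (fun x => (B y - B x) - (Z y - Z x)) '' Iic y
      = (fun t => (B - Z) y - t) '' ((B - Z) '' Iic y) := by
    rw [image_image]
    refine image_congr fun x _ => ?_
    simp only [Pi.sub_apply]
    ring
  rw [Qmap, himage, runningInf, ← Antitone.map_csInf_of_continuousAt
    (continuous_sub_left _).continuousAt (fun _ _ h => sub_le_sub_left h _) (nonempty_Iic.image _) h]

theorem Dmap_sub_Dmap (Z B : ℝ → ℝ) {x y : ℝ} (hx : BddBelow ((B - Z) '' Iic x))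
    (hy : BddBelow ((B - Z) '' Iic y)) :
    Dmap Z B y - Dmap Z B x = B y - B x + (runningInf (B - Z) x - runningInf (B - Z) y) := by
  simp only [Dmap, Qmap_eq_sub_runningInf Z B x hx, Qmap_eq_sub_runningInf Z B y hy,
    Pi.sub_apply]
  ring

theorem stmt5_general (Z Z' B : ℝ → ℝ) (hZ : Continuous Z)
    (hB : Continuous B)
    (hinc : ∀ x y : ℝ, x < y → Z y - Z x ≤ Z' y - Z' x)
    (hlim : Tendsto (fun x => Z x - B x) atBot atBot) :
    ∀ x y : ℝ, x < y →
      B y - B x ≤ Dmap Z B y - Dmap Z B x ∧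
      Dmap Z B y - Dmap Z B x ≤ Dmap Z' B y - Dmap Z' B x := by
  intro x y hxy
  have hf : ∀ t, BddBelow ((B - Z) '' Iic t) :=
    bddBelow_image_Iic_of_tendsto_atBot_atTop (hB.sub hZ)
      ((tendsto_neg_atBot_atTop.comp hlim).congr fun x => neg_sub (Z x) (B x))
  have hgf : Antitone ((B - Z') - (B - Z)) := fun u w huw => by
    rcases huw.lt_or_eq with hlt | rfl
    · simp only [Pi.sub_apply]
      linarith [hinc u w hlt]
    · rfl
  have hg : ∀ t, BddBelow ((B - Z') '' Iic t) :=
    fun t => bddBelow_image_Iic_of_antitone_sub (hf t) hgf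
  rw [Dmap_sub_Dmap Z B (hf x) (hf y), Dmap_sub_Dmap Z' B (hg x) (hg y)]
  constructor
  · linarith [runningInf_anti (hf y) hxy.le]
  · linarith [runningInf_sub_runningInf_le_of_antitone_sub hgf (hf x) (hg y) hxy.le]

/-- If `Z ≤_inc Z'` and `limsup_{x→-∞}(Z - B) = -∞`, then
`B ≤_inc D(Z,B) ≤_inc D(Z',B)`. -/
theorem stmt5 (Z Z' B : ℝ → ℝ) (hZ : Continuous Z) (hZ' : Continuous Z')
    (hB : Continuous B) (hZ0 : Z 0 = 0) (hZ'0 : Z' 0 = 0) (hB0 : B 0 = 0)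
    (hinc : ∀ x y : ℝ, x < y → Z y - Z x ≤ Z' y - Z' x)
    (hlim : Tendsto (fun x => Z x - B x) atBot atBot) :
    ∀ x y : ℝ, x < y →
      B y - B x ≤ Dmap Z B y - Dmap Z B x ∧
      Dmap Z B y - Dmap Z B x ≤ Dmap Z' B y - Dmap Z' B x :=
  stmt5_general Z Z' B hZ hB hinc hlim
end

section
/- Let B, Z: ℝ → ℝ be continuous with B(0) = Z(0) = 0, suppose lim_{x → -∞} B(x)/x = a exists, and suppose liminf_{x → -∞} Z(x)/x = b > a. Then liminf_{x → -∞} D(Z,B)(x)/x ≥ b. -/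
/-!
Fix `a < d < b` and a small `δ > 0`. Eventually `Z x ≤ d x` and `B x ≥ (a + δ) x`, so
`Z x - B x ≤ c x` with `c = d - a - δ > 0`. Since `c x` is increasing, every term of the supremum
defining `Q(y)` is at most `c y - (Z y - B y)`, whence `D y ≤ Z y + Q y ≤ c y + B y ≤ (d - 2δ) y`
for very negative `y`. Letting `d ↑ b` and `δ ↓ 0` gives the bound.
-/

open Filter

open Topology

/-- The slack bound `g ≤ f + 1` is what handles the junk value `0` of a real `liminf`. -/
theorem Real.liminf_le_liminf_of_lowerBound_transfer {α : Type*} {l : Filter α} {f g : α → ℝ}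
    {a : ℝ} (hgf : ∀ᶠ x in l, g x ≤ f x + 1)
    (hfg : ∀ d, a < d → (∀ᶠ x in l, d ≤ f x) → ∀ e < d, ∀ᶠ x in l, e ≤ g x)
    (ha : a < liminf f l) : liminf f l ≤ liminf g l := by
  by_cases hf : IsBoundedUnder (· ≥ ·) l f
  swap
  · have hg : ¬ IsBoundedUnder (· ≥ ·) l g := by
      rintro ⟨m, hm⟩
      refine hf ⟨m - 1, eventually_map.mpr ?_⟩
      filter_upwards [eventually_map.mp hm, hgf] with x hgx hgfx
      linarith
    rw [Real.liminf_of_not_isBoundedUnder hf, Real.liminf_of_not_isBoundedUnder hg]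
  by_cases hf' : IsCoboundedUnder (· ≥ ·) l f
  swap
  · have hg' : ¬ IsCoboundedUnder (· ≥ ·) l g := by
      rintro ⟨m, hm⟩
      obtain ⟨d, hd, hmd⟩ : ∃ d, (∀ᶠ x in l, d ≤ f x) ∧ max a (m + 1) < d := by
        by_contra! h
        exact hf' ⟨max a (m + 1), fun d hd => h d (eventually_map.mp hd)⟩
      have := hm (m + 1) (eventually_map.mpr <|
        hfg d ((le_max_left _ _).trans_lt hmd) hd (m + 1) ((le_max_right _ _).trans_lt hmd))
      linarith
    rw [Real.liminf_of_not_isCoboundedUnder hf', Real.liminf_of_not_isCoboundedUnder hg']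
  have hg' : IsCoboundedUnder (· ≥ ·) l g := by
    refine IsCoboundedUnder.of_frequently_le (a := liminf f l + 2) ?_
    refine ((frequently_lt_of_liminf_lt hf' (lt_add_one _)).and_eventually hgf).mono ?_
    rintro x ⟨hfx, hgfx⟩
    linarith
  refine le_of_forall_lt_imp_le_of_dense fun e he => ?_
  obtain ⟨d, hd, hdf⟩ := exists_between (max_lt ha he)
  exact le_liminf_of_le hg' <| hfg d ((le_max_left _ _).trans_lt hd)
    ((eventually_lt_of_lt_liminf hdf hf).mono fun _ => le_of_lt) e ((le_max_right _ _).trans_lt hd)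

/-- The supremum defining `Qmap` has the term `0` at `x = y`; if it is unbounded, the junk value
of `sSup` is `0` too. -/
theorem Qmap_nonneg (Z B : ℝ → ℝ) (y : ℝ) : 0 ≤ Qmap Z B y :=
  Real.sSup_nonneg' ⟨0, ⟨y, Set.self_mem_Iic, by ring⟩, le_rfl⟩

theorem sub_Qmap_zero_le_Dmap (Z B : ℝ → ℝ) (y : ℝ) : Z y - Qmap Z B 0 ≤ Dmap Z B y := by
  have := Qmap_nonneg Z B y
  unfold Dmap
  linarith

theorem Dmap_le_add_Qmap (Z B : ℝ → ℝ) (y : ℝ) : Dmap Z B y ≤ Z y + Qmap Z B y := by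
  have := Qmap_nonneg Z B 0
  unfold Dmap
  linarith

theorem eventually_Dmap_div_le_add_one (Z B : ℝ → ℝ) :
    ∀ᶠ y in atBot, Dmap Z B y / y ≤ Z y / y + 1 := by
  filter_upwards [eventually_le_atBot (-Qmap Z B 0 - 1)] with y hy
  have hy0 : y < 0 := by linarith [Qmap_nonneg Z B 0]
  rw [div_le_iff_of_neg hy0, add_mul, div_mul_cancel₀ _ hy0.ne, one_mul]
  linarith [sub_Qmap_zero_le_Dmap Z B y]

theorem eventually_Qmap_le {Z B : ℝ → ℝ} {c : ℝ} (hc : 0 ≤ c)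
    (h : ∀ᶠ x in atBot, Z x - B x ≤ c * x) :
    ∀ᶠ y in atBot, Qmap Z B y ≤ c * y - (Z y - B y) := by
  obtain ⟨M, hM⟩ := eventually_atBot.mp h
  filter_upwards [eventually_le_atBot M] with y hy
  refine csSup_le (Set.nonempty_Iic.image _) ?_
  rintro _ ⟨x, hx, rfl⟩
  have hxM := hM x (le_trans hx hy)
  have hcx := mul_le_mul_of_nonneg_left (Set.mem_Iic.mp hx) hc
  linarith

theorem eventually_le_Dmap_div {Z B : ℝ → ℝ} {a d e : ℝ}
    (hB : Tendsto (fun x => B x / x) atBot (𝓝 a)) (had : a < d)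
    (hZ : ∀ᶠ x in atBot, d ≤ Z x / x) (hed : e < d) :
    ∀ᶠ y in atBot, e ≤ Dmap Z B y / y := by
  obtain ⟨δ, hδ, hδa, hδe⟩ : ∃ δ, 0 < δ ∧ δ < d - a ∧ 2 * δ ≤ d - e :=
    ⟨min (d - a) (d - e) / 2, half_pos (lt_min (sub_pos.2 had) (sub_pos.2 hed)),
      by linarith [min_le_left (d - a) (d - e)], by linarith [min_le_right (d - a) (d - e)]⟩
  have hneg : ∀ᶠ x : ℝ in atBot, x < 0 := eventually_lt_atBot 0
  have hBlo : ∀ᶠ x in atBot, a - δ < B x / x := hB.eventually (eventually_gt_nhds (by linarith))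
  have hBhi : ∀ᶠ x in atBot, B x / x < a + δ := hB.eventually (eventually_lt_nhds (by linarith))
  have hgap : ∀ᶠ x in atBot, Z x - B x ≤ (d - a - δ) * x := by
    filter_upwards [hZ, hBhi, hneg] with x hZx hBx hx
    rw [le_div_iff_of_neg hx] at hZx
    rw [div_lt_iff_of_neg hx] at hBx
    linarith
  filter_upwards [eventually_Qmap_le (by linarith) hgap, hBlo, hneg] with y hQy hBy hy
  rw [lt_div_iff_of_neg hy] at hBy
  rw [le_div_iff_of_neg hy]
  have hslack := mul_nonpos_of_nonneg_of_nonpos (by linarith : 0 ≤ d - 2 * δ - e) hy.le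
  linarith [Dmap_le_add_Qmap Z B y]

theorem stmt8_general (B Z : ℝ → ℝ) (a b : ℝ) (hab : a < b)
    (ha : Tendsto (fun x => B x / x) atBot (nhds a))
    (hb : liminf (fun x => Z x / x) atBot = b) :
    b ≤ liminf (fun x => Dmap Z B x / x) atBot := by
  subst hb
  exact Real.liminf_le_liminf_of_lowerBound_transfer (eventually_Dmap_div_le_add_one Z B)
    (fun _ had hZ _ hed => eventually_le_Dmap_div ha had hZ hed) hab

/-- If `lim_{x→-∞} B(x)/x = a` and `liminf_{x→-∞} Z(x)/x = b > a`, then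
`liminf_{x→-∞} D(Z,B)(x)/x ≥ b`. -/
theorem stmt8 (B Z : ℝ → ℝ) (hB : Continuous B) (hZ : Continuous Z)
    (hB0 : B 0 = 0) (hZ0 : Z 0 = 0) (a b : ℝ) (hab : a < b)
    (ha : Tendsto (fun x => B x / x) atBot (nhds a))
    (hb : liminf (fun x => Z x / x) atBot = b) :
    b ≤ liminf (fun x => Dmap Z B x / x) atBot :=
  stmt8_general B Z a b hab ha hb
end

section
/- For n ≥ 2, let Z¹,…,Zⁿ: ℝ → ℝ be continuous with Zⁱ(0) = 0 for each i, and define A_n(y) = sup over chains -∞ < x_{n-1} ≤ x_{n-2} ≤ … ≤ x_1 ≤ y of Σ_{i=1}^{n-1} (Z^{i+1}(x_i) - Z^i(x_i)). If A_n(0) is finite, then D^{(n)}(Zⁿ, Z^{n-1}, …, Z¹)(y) = Z¹(y) + A_n(y) - A_n(0), where D^{(n)} is the n-fold iterated departure map. -/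
open Filter

/-- Iterated departure map: with `Z i = Z^{i+1}`,
`Diter n Z = D^{(n+1)}(Z^{n+1}, …, Z^1) = D(D^{(n)}(Z^{n+1},…,Z^2), Z^1)`. -/
noncomputable def Diter : (n : ℕ) → (Fin (n + 1) → ℝ → ℝ) → ℝ → ℝ
  | 0, Z => Z 0
  | n + 1, Z => Dmap (Diter n (fun i => Z i.succ)) (Z 0)

/-- `Achain n Z y` is the supremum over chains `-∞ < x_n ≤ … ≤ x_0 ≤ y` of
`∑_{j} (Z^{j+2}(x_j) - Z^{j+1}(x_j))` (with `Z j = Z^{j+1}`, `n+2` functions in total). -/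
noncomputable def Achain (n : ℕ) (Z : Fin (n + 2) → ℝ → ℝ) (y : ℝ) : ℝ :=
  sSup {s : ℝ | ∃ x : Fin (n + 1) → ℝ, Antitone x ∧ x 0 ≤ y ∧
    s = ∑ j : Fin (n + 1), (Z j.succ (x j) - Z j.castSucc (x j))}

/-!
Since `Q(W,B)(y) = B(y) - W(y) + sup_{x ≤ y} (W(x) - B(x))`, the departure `D(W,B)` is `B` plus
the increment of the running supremum of `W - B`. By induction
`W = D^{(n-1)}(Zⁿ,…,Z²) = Z² + A' - A'(0)`, where `A'` is the chain supremum for `Zⁿ,…,Z²`,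
so `W - Z¹` is, up to a constant, `Z² - Z¹ + A'`. Splitting off the first point `x_1` of a chain
shows that the running supremum of `Z² - Z¹ + A'` is exactly `A_n`.

Finiteness of `A_n(0)` propagates to every `y`: clipping a chain at `0` gives a chain ending
below `0`, and the terms with `0 < x_j ≤ y` are bounded by continuity on the compact `[0, y]`,
since `Zⁱ(0) = 0`.
-/

open Set

theorem isLUB_image_add_const {ι G : Type*} [AddGroup G] [Preorder G] [AddRightMono G]
    {f : ι → G} {s : Set ι} {a : G} (h : IsLUB (f '' s) a) (c : G) :
    IsLUB ((fun x => f x + c) '' s) (a + c) := by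
  simpa only [image_image, OrderIso.addRight_apply] using (OrderIso.addRight c).isLUB_image'.2 h

theorem Qmap_eq_of_isLUB {W B : ℝ → ℝ} {y m : ℝ}
    (h : IsLUB ((fun x => W x - B x) '' Iic y) m) : Qmap W B y = m + (B y - W y) := by
  have hfun : (fun x => (B y - B x) - (W y - W x)) = fun x => (W x - B x) + (B y - W y) := by
    funext x; ring
  rw [Qmap, hfun]
  exact (isLUB_image_add_const h _).csSup_eq (nonempty_Iic.image _)

theorem Dmap_eq_of_isLUB {W B M : ℝ → ℝ}
    (hM : ∀ y, IsLUB ((fun x => W x - B x) '' Iic y) (M y)) (y : ℝ) :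
    Dmap W B y = B y + M y - M 0 - B 0 + W 0 := by
  rw [Dmap, Qmap_eq_of_isLUB (hM y), Qmap_eq_of_isLUB (hM 0)]
  ring

def chainSums (n : ℕ) (Z : Fin (n + 2) → ℝ → ℝ) (y : ℝ) : Set ℝ :=
  {s : ℝ | ∃ x : Fin (n + 1) → ℝ, Antitone x ∧ x 0 ≤ y ∧
    s = ∑ j : Fin (n + 1), (Z j.succ (x j) - Z j.castSucc (x j))}

theorem chainSums_nonempty (n : ℕ) (Z : Fin (n + 2) → ℝ → ℝ) (y : ℝ) :
    (chainSums n Z y).Nonempty :=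
  ⟨_, fun _ => y, antitone_const, le_rfl, rfl⟩

theorem isLUB_Achain {n : ℕ} {Z : Fin (n + 2) → ℝ → ℝ} {y : ℝ}
    (hb : BddAbove (chainSums n Z y)) : IsLUB (chainSums n Z y) (Achain n Z y) :=
  isLUB_csSup (chainSums_nonempty n Z y) hb

theorem chainSums_zero (Z : Fin 2 → ℝ → ℝ) (y : ℝ) :
    chainSums 0 Z y = (fun x => Z 1 x - Z 0 x) '' Iic y := by
  ext s
  constructor
  · rintro ⟨x, -, hx, rfl⟩
    exact ⟨x 0, hx, by simp⟩
  · rintro ⟨x, hx, rfl⟩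
    exact ⟨fun _ => x, antitone_const, hx, by simp⟩

theorem chainSums_succ {n : ℕ} (Z : Fin (n + 3) → ℝ → ℝ) (y : ℝ) :
    chainSums (n + 1) Z y =
      ⋃ x : Iic y, (fun s => Z 1 x - Z 0 x + s) '' chainSums n (fun i => Z i.succ) x := by
  ext s
  simp only [mem_iUnion, mem_image, Subtype.exists, mem_Iic, exists_prop]
  constructor
  · rintro ⟨v, hv, hvy, rfl⟩
    rw [← Fin.cons_self_tail v] at hv
    obtain ⟨htail, hanti⟩ := antitone_vecCons.1 hv
    refine ⟨v 0, hvy, _, ⟨Fin.tail v, hanti, htail, rfl⟩, ?_⟩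
    rw [Fin.sum_univ_succ (n := n + 1)]
    rfl
  · rintro ⟨x, hxy, _, ⟨u, hu, hux, rfl⟩, rfl⟩
    exact ⟨Fin.cons x u, hu.vecCons hux, hxy, by rw [Fin.sum_univ_succ (n := n + 1)]; rfl⟩

theorem exists_le_apply_min_zero_add {g : ℝ → ℝ} (hg : Continuous g) (hg0 : g 0 = 0)
    (y : ℝ) : ∃ C, ∀ t ≤ y, g t ≤ g (min t 0) + C := by
  obtain ⟨C, hC⟩ := (isCompact_Icc (a := 0) (b := y)).bddAbove_image hg.continuousOn
  refine ⟨max C 0, fun t hty => ?_⟩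
  rcases le_total t 0 with ht | ht
  · rw [min_eq_left ht]
    linarith [le_max_right C 0]
  · rw [min_eq_right ht, hg0]
    linarith [hC ⟨t, ⟨ht, hty⟩, rfl⟩, le_max_left C 0]

theorem bddAbove_chainSums {n : ℕ} {Z : Fin (n + 2) → ℝ → ℝ}
    (hcont : ∀ i, Continuous (Z i)) (h0 : ∀ i, Z i 0 = 0) (hb : BddAbove (chainSums n Z 0))
    (y : ℝ) : BddAbove (chainSums n Z y) := by
  obtain ⟨B, hB⟩ := hb
  choose C hC using fun j : Fin (n + 1) =>
    exists_le_apply_min_zero_add ((hcont j.succ).sub (hcont j.castSucc)) (by simp [h0]) y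
  refine ⟨B + ∑ j, C j, ?_⟩
  rintro _ ⟨x, hx, hxy, rfl⟩
  have hclip : ∑ j, (Z j.succ (min (x j) 0) - Z j.castSucc (min (x j) 0)) ∈ chainSums n Z 0 :=
    ⟨_, hx.min antitone_const, min_le_right _ _, rfl⟩
  calc ∑ j, (Z j.succ (x j) - Z j.castSucc (x j))
      ≤ ∑ j, (Z j.succ (min (x j) 0) - Z j.castSucc (min (x j) 0) + C j) :=
        Finset.sum_le_sum fun j _ => hC j _ ((hx (Fin.zero_le j)).trans hxy)
    _ ≤ B + ∑ j, C j := by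
        rw [Finset.sum_add_distrib]
        exact add_le_add_left (hB hclip) _

theorem bddAbove_chainSums_tail {n : ℕ} {Z : Fin (n + 3) → ℝ → ℝ} {y : ℝ}
    (hb : BddAbove (chainSums (n + 1) Z y)) : BddAbove (chainSums n (fun i => Z i.succ) y) := by
  refine (OrderIso.addLeft (Z 1 y - Z 0 y)).bddAbove_image.1 (hb.mono ?_)
  rw [chainSums_succ]
  exact subset_iUnion_of_subset ⟨y, mem_Iic.2 le_rfl⟩ subset_rfl

theorem isLUB_Achain_zero {Z : Fin 2 → ℝ → ℝ} {y : ℝ} (hb : BddAbove (chainSums 0 Z y)) :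
    IsLUB ((fun x => Z 1 x - Z 0 x) '' Iic y) (Achain 0 Z y) := by
  simpa only [chainSums_zero] using isLUB_Achain hb

theorem isLUB_Achain_succ {n : ℕ} {Z : Fin (n + 3) → ℝ → ℝ}
    (hb : ∀ y, BddAbove (chainSums (n + 1) Z y)) (y : ℝ) :
    IsLUB ((fun x => Z 1 x - Z 0 x + Achain n (fun i => Z i.succ) x) '' Iic y)
      (Achain (n + 1) Z y) := by
  rw [image_eq_range, isLUB_iUnion_iff_of_isLUB, ← chainSums_succ]
  · exact isLUB_Achain (hb y)
  · intro x
    exact (OrderIso.addLeft _).isLUB_image'.2 (isLUB_Achain (bddAbove_chainSums_tail (hb x)))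

/-- for `n ≥ 2` functions `Z^1,…,Z^n` vanishing at `0`, if `A_n(0)` is finite then
`D^{(n)}(Z^n,…,Z^1)(y) = Z^1(y) + A_n(y) - A_n(0)`. Here there are `n+2` functions, `n ≥ 0`. -/
theorem stmt9 (n : ℕ) (Z : Fin (n + 2) → ℝ → ℝ)
    (hcont : ∀ i, Continuous (Z i)) (h0 : ∀ i, Z i 0 = 0)
    (hfin : BddAbove {s : ℝ | ∃ x : Fin (n + 1) → ℝ, Antitone x ∧ x 0 ≤ 0 ∧
      s = ∑ j : Fin (n + 1), (Z j.succ (x j) - Z j.castSucc (x j))}) :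
    ∀ y : ℝ, Diter (n + 1) Z y = Z 0 y + Achain n Z y - Achain n Z 0 := by
  induction n with
  | zero =>
    have hb := bddAbove_chainSums hcont h0 hfin
    intro y
    rw [show Diter 1 Z = Dmap (Z 1) (Z 0) from rfl,
      Dmap_eq_of_isLUB (fun y => isLUB_Achain_zero (hb y)), h0, h0]
    ring
  | succ n ih =>
    have hb := bddAbove_chainSums hcont h0 hfin
    have hW := ih (fun i => Z i.succ) (fun i => hcont _) (fun i => h0 _)
      (bddAbove_chainSums_tail (hb 0))
    have hM : ∀ y, IsLUB ((fun x => Diter (n + 1) (fun i => Z i.succ) x - Z 0 x) '' Iic y)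
        (Achain (n + 1) Z y + -Achain n (fun i => Z i.succ) 0) := by
      have hshift : (fun x => Diter (n + 1) (fun i => Z i.succ) x - Z 0 x) = fun x =>
          Z 1 x - Z 0 x + Achain n (fun i => Z i.succ) x + -Achain n (fun i => Z i.succ) 0 := by
        funext x
        rw [hW, Fin.succ_zero_eq_one]
        ring
      intro y
      rw [hshift]
      exact isLUB_image_add_const (isLUB_Achain_succ hb y) _
    intro y
    rw [show Diter (n + 2) Z = Dmap (Diter (n + 1) (fun i => Z i.succ)) (Z 0) from rfl,
      Dmap_eq_of_isLUB hM, hW, h0, h0]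
    ring
end

section
/- Let B¹, Z¹, Z² be continuous real functions vanishing at 0 such that the asymptotic slopes at -∞ exist and are strictly increasing in the order B¹, Z¹, Z². Set B² = R(Z¹, B¹). Then D(D(Z², B²), D(Z¹, B¹)) = D(D(Z², Z¹), B¹). -/
open Filter

/-- Reflected-output map: `R(Z,B)(y) = B(y) + Q(Z,B)(0) - Q(Z,B)(y)`. -/
noncomputable def Rmap (Z B : ℝ → ℝ) (y : ℝ) : ℝ :=
  B y + Qmap Z B 0 - Qmap Z B y

/-!
Write `I F y = inf_{x ≤ y} F x` for the running infimum. Then `Q(Z,B) = F - I F` with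
`F = B - Z`, so up to additive constants `D(Z,B) = B - I(B - Z)` and `R(Z,B) = Z + I(B - Z)`.
With `f = B¹ - Z¹` and `g = Z¹ - Z²`, the right-hand side is `B¹ - I(f + I g)` and the
left-hand side is `B¹ - I f - I h` with `h = f - 2 I f + I(g + I f)`, up to constants; both
sides take the value `Z²(0)` at `0`, so it suffices that `I(f + I g) = I f + I h`.

Both sides of this identity are infima of `g w + (…)` over `w ≤ y`, and the identity comes
down to `inf_{[w,y]} f = I f y + I f w + inf_{z ∈ [w,y]} (f z - 2 I f z)`: when `I f` drops
strictly between `w` and `y`, the continuous `f` reaches the level `I f w` at a point `z`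
where it is still a running minimum, and there `f z - 2 I f z = -I f w`.
Negative slopes at `-∞` make `f` and `g` bounded below on every half-line, so all these
infima are finite.
-/

open Set

namespace Tandem

def BddBelowOnIic (F : ℝ → ℝ) : Prop := ∀ y, BddBelow (F '' Iic y)

noncomputable def runInf (F : ℝ → ℝ) (y : ℝ) : ℝ := sInf (F '' Iic y)

section RunInf

variable {F G : ℝ → ℝ} {w x y z c : ℝ}

theorem runInf_le (hF : BddBelowOnIic F) (hxy : x ≤ y) : runInf F y ≤ F x :=
  csInf_le (hF y) (mem_image_of_mem F hxy)

theorem le_runInf (h : ∀ x ≤ y, c ≤ F x) : c ≤ runInf F y :=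
  le_csInf (nonempty_Iic.image F) (forall_mem_image.2 h)

theorem runInf_anti (hF : BddBelowOnIic F) : Antitone (runInf F) :=
  fun _ _ hxy => le_runInf fun _ hx => runInf_le hF (hx.trans hxy)

theorem exists_lt_of_runInf_lt (h : runInf F y < c) : ∃ x ≤ y, F x < c := by
  obtain ⟨_, ⟨x, hx, rfl⟩, hlt⟩ := exists_lt_of_csInf_lt (nonempty_Iic.image F) h
  exact ⟨x, hx, hlt⟩

theorem BddBelowOnIic.runInf (hF : BddBelowOnIic F) : BddBelowOnIic (runInf F) :=
  fun y => ⟨Tandem.runInf F y, forall_mem_image.2 fun _ hx => runInf_anti hF hx⟩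

theorem BddBelowOnIic.add (hF : BddBelowOnIic F) (hG : BddBelowOnIic G) :
    BddBelowOnIic (F + G) := fun y => by
  obtain ⟨a, ha⟩ := hF y
  obtain ⟨b, hb⟩ := hG y
  exact ⟨a + b, forall_mem_image.2 fun x hx =>
    add_le_add (ha (mem_image_of_mem F hx)) (hb (mem_image_of_mem G hx))⟩

theorem bddBelowOnIic_of_eventually_le (hF : Continuous F) (h : ∀ᶠ x in atBot, c ≤ F x) :
    BddBelowOnIic F := fun y => by
  obtain ⟨M, hM⟩ := eventually_atBot.1 h
  obtain ⟨b, hb⟩ := (isCompact_Icc (a := M) (b := y)).bddBelow_image hF.continuousOn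
  refine ⟨min c b, forall_mem_image.2 fun x hx => ?_⟩
  rcases le_total x M with hxM | hMx
  · exact (min_le_left _ _).trans (hM x hxM)
  · exact (min_le_right _ _).trans (hb (mem_image_of_mem F ⟨hMx, hx⟩))

theorem eventually_pos_of_tendsto_div_atBot {L : ℝ} (hL : L < 0)
    (h : Tendsto (fun x => F x / x) atBot (nhds L)) : ∀ᶠ x in atBot, 0 < F x := by
  filter_upwards [h.eventually (gt_mem_nhds hL), eventually_lt_atBot 0] with x hFx hx
  simpa [div_mul_cancel₀ _ hx.ne] using mul_pos_of_neg_of_neg hFx hx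

theorem runInf_le_runInf_or_exists (hF : Continuous F) (hFb : BddBelowOnIic F) (hzy : z ≤ y) :
    runInf F z ≤ runInf F y ∨ ∃ t ∈ Icc z y, F t ≤ runInf F y := by
  obtain ⟨t, ht, htmin⟩ :=
    isCompact_Icc.exists_isMinOn (nonempty_Icc.2 hzy) hF.continuousOn
  have : min (runInf F z) (F t) ≤ runInf F y := le_runInf fun x hx => by
    rcases le_total x z with hxz | hzx
    · exact (min_le_left _ _).trans (runInf_le hFb hxz)
    · exact (min_le_right _ _).trans (htmin ⟨hzx, hx⟩)
  exact (min_le_iff.1 this).imp id fun h => ⟨t, ht, h⟩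

theorem exists_apply_eq_runInf_of_runInf_lt (hF : Continuous F) (hFb : BddBelowOnIic F)
    (h : runInf F y < runInf F w) :
    ∃ z ∈ Icc w y, F z = runInf F w ∧ runInf F z = runInf F w := by
  set S := Icc w y ∩ {z | F z ≤ runInf F w}
  have hS : S.Nonempty := by
    obtain ⟨x, hxy, hx⟩ := exists_lt_of_runInf_lt h
    have hwx : w ≤ x := le_of_not_ge fun hxw => hx.not_ge (runInf_le hFb hxw)
    exact ⟨x, ⟨hwx, hxy⟩, hx.le⟩
  have hSc : IsClosed S := isClosed_Icc.inter (isClosed_le hF continuous_const)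
  have hSb : BddBelow S := ⟨w, fun _ hs => hs.1.1⟩
  have hz : sInf S ∈ S := hSc.csInf_mem hS hSb
  have hlow : Iio (sInf S) ⊆ {u | runInf F w ≤ F u} := fun u hu => by
    rcases le_total u w with huw | hwu
    · exact runInf_le hFb huw
    · refine le_of_not_gt fun (hFu : F u < runInf F w) => (csInf_le hSb ?_).not_gt hu
      exact ⟨⟨hwu, hu.le.trans hz.1.2⟩, hFu.le⟩
  have hIic := (isClosed_le continuous_const hF).closure_subset_iff.2 hlow
  rw [closure_Iio] at hIic
  have hrun : runInf F w ≤ runInf F (sInf S) := le_runInf fun u hu => hIic hu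
  exact ⟨sInf S, hz.1, le_antisymm hz.2 (hIic self_mem_Iic),
    le_antisymm (runInf_anti hFb hz.1.1) hrun⟩

end RunInf

section Identity

variable {f g : ℝ → ℝ}

theorem runInf_add_runInf_le (hf : BddBelowOnIic f) (hg : BddBelowOnIic g) (x : ℝ) :
    runInf g x + runInf f x ≤ runInf (g + runInf f) x :=
  le_runInf fun _ hu => add_le_add (runInf_le hg hu) (runInf_anti hf hu)

theorem bddBelowOnIic_sub_two_mul_runInf_add (hf : BddBelowOnIic f) (hg : BddBelowOnIic g) :
    BddBelowOnIic (fun x => f x - 2 * runInf f x + runInf (g + runInf f) x) := fun y =>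
  ⟨runInf g y, forall_mem_image.2 fun x hx => by
    linarith [runInf_le hf (le_refl x), runInf_add_runInf_le hf hg x, runInf_anti hg hx]⟩

theorem runInf_add_runInf_eq (hf : Continuous f) (hfb : BddBelowOnIic f)
    (hgb : BddBelowOnIic g) (y : ℝ) :
    runInf (f + runInf g) y =
      runInf f y + runInf (fun x => f x - 2 * runInf f x + runInf (g + runInf f) x) y := by
  have hmb := hfb.add hgb.runInf
  have hPb := hgb.add hfb.runInf
  have hhb := bddBelowOnIic_sub_two_mul_runInf_add hfb hgb
  set I := runInf f
  set P := runInf (g + I)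
  set h := fun x => f x - 2 * I x + P x
  apply le_antisymm
  · suffices key : ∀ z ≤ y, runInf (f + runInf g) y - I y ≤ h z by
      linarith [le_runInf key]
    intro z hz
    obtain ⟨x, hx, hfx⟩ : ∃ x ∈ Icc z y, f x ≤ I y + f z - I z := by
      rcases runInf_le_runInf_or_exists hf hfb hz with hI | ⟨t, ht, hft⟩
      · exact ⟨z, ⟨le_rfl, hz⟩, by linarith⟩
      · exact ⟨t, ht, by linarith [runInf_le hfb (le_refl z)]⟩
    have hm : runInf (f + runInf g) y ≤ f x + runInf g x := runInf_le hmb hx.2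
    suffices key : runInf (f + runInf g) y - I y - f z + 2 * I z ≤ P z by
      show _ ≤ f z - 2 * I z + P z
      linarith
    refine le_runInf fun u hu => show _ ≤ g u + I u from ?_
    linarith [runInf_le hgb (hu.trans hx.1), runInf_anti hfb hu]
  · refine le_runInf fun x hx => show _ ≤ f x + runInf g x from ?_
    suffices key : ∀ w ≤ x, I y + runInf h y - f x ≤ g w by linarith [le_runInf key]
    intro w hw
    obtain ⟨z, hz, hfz⟩ : ∃ z ∈ Icc w y, I y + f z - 2 * I z + I w ≤ f x := by
      rcases le_or_gt (I w) (I y) with hI | hI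
      · exact ⟨x, ⟨hw, hx⟩, by linarith [runInf_anti hfb hx, runInf_anti hfb hw]⟩
      · obtain ⟨z, hz, hfz, hIz⟩ := exists_apply_eq_runInf_of_runInf_lt hf hfb hI
        exact ⟨z, hz, by linarith [runInf_le hfb hx]⟩
    have hhz : runInf h y ≤ f z - 2 * I z + P z := runInf_le hhb hz.2
    have hPz : P z ≤ g w + I w := runInf_le hPb hz.1
    linarith

end Identity

section Queue

variable {F : ℝ → ℝ} {c : ℝ}

theorem Qmap_eq_sub_runInf (Z B : ℝ → ℝ) (hF : BddBelowOnIic F)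
    (h : ∀ x, B x - Z x = F x + c) (y : ℝ) :
    Qmap Z B y = F y - runInf F y := by
  have himg : (fun x => (B y - B x) - (Z y - Z x)) '' Iic y = (F y - ·) '' (F '' Iic y) := by
    rw [image_image]
    exact image_congr fun x _ => by linarith [h x, h y]
  rw [Qmap, himg, runInf, Antitone.map_csInf_of_continuousAt (continuous_sub_left _).continuousAt
    (fun _ _ h => sub_le_sub_left h _) (nonempty_Iic.image F) (hF y)]

theorem Dmap_eq_sub_runInf (Z B : ℝ → ℝ) (hF : BddBelowOnIic F)
    (h : ∀ x, B x - Z x = F x + c) :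
    ∃ k, ∀ y, Dmap Z B y = B y - runInf F y + k :=
  ⟨runInf F 0 - F 0 - c, fun y => by
    rw [Dmap, Qmap_eq_sub_runInf Z B hF h, Qmap_eq_sub_runInf Z B hF h]; linarith [h y]⟩

theorem Rmap_eq_add_runInf (Z B : ℝ → ℝ) (hF : BddBelowOnIic F)
    (h : ∀ x, B x - Z x = F x + c) :
    ∃ k, ∀ y, Rmap Z B y = Z y + runInf F y + k :=
  ⟨c + F 0 - runInf F 0, fun y => by
    rw [Rmap, Qmap_eq_sub_runInf Z B hF h, Qmap_eq_sub_runInf Z B hF h]; linarith [h y]⟩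

theorem Dmap_apply_zero (Z B : ℝ → ℝ) : Dmap Z B 0 = Z 0 := add_sub_cancel_right _ _

end Queue

theorem Dmap_Dmap_Rmap_eq {B1 Z1 Z2 : ℝ → ℝ} (hf : Continuous (B1 - Z1))
    (hfb : BddBelowOnIic (B1 - Z1)) (hgb : BddBelowOnIic (Z1 - Z2)) :
    Dmap (Dmap Z2 (Rmap Z1 B1)) (Dmap Z1 B1) = Dmap (Dmap Z2 Z1) B1 := by
  set f := B1 - Z1
  set g := Z1 - Z2
  obtain ⟨k1, hD1⟩ := Dmap_eq_sub_runInf Z1 B1 hfb (c := 0) fun _ => (add_zero _).symm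
  obtain ⟨k2, hB2⟩ := Rmap_eq_add_runInf Z1 B1 hfb (c := 0) fun _ => (add_zero _).symm
  obtain ⟨k3, hD2⟩ := Dmap_eq_sub_runInf Z2 (Rmap Z1 B1) (hgb.add hfb.runInf) (c := k2)
    fun x => by simp only [hB2, g, Pi.add_apply, Pi.sub_apply]; ring
  obtain ⟨k4, hL⟩ := Dmap_eq_sub_runInf (Dmap Z2 (Rmap Z1 B1)) (Dmap Z1 B1)
    (bddBelowOnIic_sub_two_mul_runInf_add hfb hgb) (c := k1 - k2 - k3)
    fun x => by simp only [hD1, hD2, hB2, f, Pi.sub_apply]; ring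
  obtain ⟨k5, hD4⟩ := Dmap_eq_sub_runInf Z2 Z1 hgb (c := 0) fun _ => (add_zero _).symm
  obtain ⟨k6, hR⟩ := Dmap_eq_sub_runInf (Dmap Z2 Z1) B1 (hfb.add hgb.runInf) (c := -k5)
    fun x => by simp only [hD4, f, g, Pi.add_apply, Pi.sub_apply]; ring
  have h0 : Dmap (Dmap Z2 (Rmap Z1 B1)) (Dmap Z1 B1) 0 = Dmap (Dmap Z2 Z1) B1 0 := by
    simp only [Dmap_apply_zero]
  funext y
  rw [hL, hR, hD1, runInf_add_runInf_eq hf hfb hgb] at h0 ⊢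
  linarith

end Tandem

open Tandem in
theorem stmt10_general (B1 Z1 Z2 : ℝ → ℝ)
    (hB1 : Continuous B1) (hZ1 : Continuous Z1) (hZ2 : Continuous Z2)
    (a b c : ℝ) (hab : a < b) (hbc : b < c)
    (ha : Tendsto (fun x => B1 x / x) atBot (nhds a))
    (hb : Tendsto (fun x => Z1 x / x) atBot (nhds b))
    (hc : Tendsto (fun x => Z2 x / x) atBot (nhds c)) :
    Dmap (Dmap Z2 (Rmap Z1 B1)) (Dmap Z1 B1) = Dmap (Dmap Z2 Z1) B1 := by
  have hfb : BddBelowOnIic (B1 - Z1) := bddBelowOnIic_of_eventually_le (hB1.sub hZ1)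
    ((eventually_pos_of_tendsto_div_atBot (F := B1 - Z1) (sub_neg.2 hab)
      (by simpa only [Pi.sub_apply, sub_div] using ha.sub hb)).mono fun _ => le_of_lt)
  have hgb : BddBelowOnIic (Z1 - Z2) := bddBelowOnIic_of_eventually_le (hZ1.sub hZ2)
    ((eventually_pos_of_tendsto_div_atBot (F := Z1 - Z2) (sub_neg.2 hbc)
      (by simpa only [Pi.sub_apply, sub_div] using hb.sub hc)).mono fun _ => le_of_lt)
  exact Dmap_Dmap_Rmap_eq (hB1.sub hZ1) hfb hgb

/-- for continuous `B¹, Z¹, Z²` vanishing at `0` with strictly increasing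
asymptotic slopes at `-∞`, and `B² = R(Z¹,B¹)`,
`D(D(Z²,B²), D(Z¹,B¹)) = D(D(Z²,Z¹), B¹)`. -/
theorem stmt10 (B1 Z1 Z2 : ℝ → ℝ)
    (hB1 : Continuous B1) (hZ1 : Continuous Z1) (hZ2 : Continuous Z2)
    (hB10 : B1 0 = 0) (hZ10 : Z1 0 = 0) (hZ20 : Z2 0 = 0)
    (a b c : ℝ) (hab : a < b) (hbc : b < c)
    (ha : Tendsto (fun x => B1 x / x) atBot (nhds a))
    (hb : Tendsto (fun x => Z1 x / x) atBot (nhds b))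
    (hc : Tendsto (fun x => Z2 x / x) atBot (nhds c)) :
    Dmap (Dmap Z2 (Rmap Z1 B1)) (Dmap Z1 B1) = Dmap (Dmap Z2 Z1) B1 :=
  stmt10_general B1 Z1 Z2 hB1 hZ1 hZ2 a b c hab hbc ha hb hc
end

section
/- Let Y = {Y(t) : t ≥ 0} be a nondecreasing stochastic process with stationary increments such that (i) E[Y(b) - Y(a)] < ∞ for all a < b, (ii) P(Y(t) = Y(0)) ∈ (0,1) for all sufficiently small t > 0, and (iii) liminf_{t ↓ 0} E[Y(t) - Y(0) | Y(t) > Y(0)] > 0. Then almost surely the paths of Y are step functions with finitely many jumps in each bounded interval; for each fixed t ≥ 0 there is a jump at t with probability 0; and for a < b the expected number of jump points in [a,b] equals E[Y(b) - Y(a)] / lim_{n → ∞} E[Y(2^{-n}) - Y(0) | Y(2^{-n}) > Y(0)]. -/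
open MeasureTheory Filter
open scoped ENNReal

/-- `t` is a point of increase (jump point) of the nondecreasing path `g` on `[0,∞)`:
`g(t+ε) > g((t-ε) ∨ 0)` for all `ε > 0`. -/
def PtInc (g : ℝ → ℝ) (t : ℝ) : Prop :=
  ∀ ε : ℝ, 0 < ε → g (max (t - ε) 0) < g (t + ε)

/-!
Write `q s = P (Y s > Y 0)` and `m s = E [Y s - Y 0]`. Stationarity makes `m` additive, hence
linear, and `q` subadditive, so `Λₙ = 2ⁿ q (2⁻ⁿ)` is nondecreasing. As
`c (2⁻ⁿ) = m (2⁻ⁿ) / q (2⁻ⁿ) = m 1 / Λₙ` stays above some `δ > 0`, `Λₙ` is bounded and converges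
to some `ρ > 0`, and `c (2⁻ⁿ) → m 1 / ρ`. A jump at a fixed `t` forces an increase over
`[t - 2⁻ⁿ⁻¹, t + 2⁻ⁿ⁻¹]`, an event of probability at most `q (2⁻ⁿ) → 0`.

So almost surely no dyadic point of `[a, b]` is a jump, and then the number of cells of mesh
`2⁻ⁿ` of `[a, b]` on which `Y` increases is nondecreasing in `n`, with limit the number of jumps
in `[a, b]`. By monotone convergence the expected number of jumps is
`lim (b - a) 2ⁿ q (2⁻ⁿ) = (b - a) ρ = E [Y b - Y a] / (m 1 / ρ)`. It is finite, so the paths are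
almost surely step functions.
-/

open Set ProbabilityTheory Topology

section PointsOfIncrease

variable {g : ℝ → ℝ} {l r t : ℝ}

theorem PtInc.lt_of_mem_Ioo (hg : MonotoneOn g (Ici 0)) (ht : PtInc g t) (hl : 0 ≤ l)
    (htlr : t ∈ Ioo l r) : g l < g r := by
  obtain ⟨hlt, htr⟩ := htlr
  have hε : 0 < min (t - l) (r - t) := lt_min (by linarith) (by linarith)
  have h₁ := min_le_left (t - l) (r - t)
  have h₂ := min_le_right (t - l) (r - t)
  calc g l ≤ g (max (t - min (t - l) (r - t)) 0) :=
        hg hl (mem_Ici.2 (le_max_right _ _)) (le_max_of_le_left (by linarith))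
    _ < g (t + min (t - l) (r - t)) := ht _ hε
    _ ≤ g r := hg (mem_Ici.2 (by linarith)) (mem_Ici.2 (by linarith)) (by linarith)

/-- The infimum of the points where `g` exceeds `g l` is a point of increase. -/
theorem exists_ptInc_mem_Icc (hg : MonotoneOn g (Ici 0)) (hl : 0 ≤ l) (hlr : l ≤ r)
    (h : g l < g r) : ∃ t ∈ Icc l r, PtInc g t := by
  set T := {x | x ∈ Icc l r ∧ g l < g x}
  have hrT : r ∈ T := ⟨⟨hlr, le_rfl⟩, h⟩
  have hbdd : BddBelow T := ⟨l, fun x hx => hx.1.1⟩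
  have hlT : l ≤ sInf T := le_csInf ⟨r, hrT⟩ fun x hx => hx.1.1
  have hTr : sInf T ≤ r := csInf_le hbdd hrT
  refine ⟨sInf T, ⟨hlT, hTr⟩, fun ε hε => ?_⟩
  obtain ⟨x, hxT, hx⟩ := exists_lt_of_csInf_lt ⟨r, hrT⟩ (lt_add_of_pos_right (sInf T) hε)
  have hleft : g (max (sInf T - ε) 0) ≤ g l := by
    rcases le_or_gt (sInf T - ε) l with hc | hc
    · exact hg (mem_Ici.2 (le_max_right _ _)) hl (max_le hc hl)
    · have hnot : sInf T - ε ∉ T := fun hmem => by linarith [csInf_le hbdd hmem]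
      rw [max_eq_left (by linarith)]
      by_contra hcon
      exact hnot ⟨⟨hc.le, by linarith⟩, lt_of_not_ge hcon⟩
  calc g (max (sInf T - ε) 0) ≤ g l := hleft
    _ < g x := hxT.2
    _ ≤ g (sInf T + ε) := hg (mem_Ici.2 (hl.trans hxT.1.1)) (mem_Ici.2 (by linarith)) hx.le

theorem exists_forall_eq_of_not_ptInc (hg : MonotoneOn g (Ici 0)) (ht : 0 ≤ t)
    (hinc : ¬ PtInc g t) : ∃ ε, 0 < ε ∧ ∀ u, 0 ≤ u → |u - t| < ε → g u = g t := by
  simp only [PtInc, not_forall, not_lt] at hinc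
  obtain ⟨ε, hε, hle⟩ := hinc
  refine ⟨ε, hε, fun u hu hut => ?_⟩
  rw [abs_sub_lt_iff] at hut
  have h0 : max (t - ε) 0 ∈ Ici 0 := mem_Ici.2 (le_max_right _ _)
  have h1 := hg h0 hu (max_le (by linarith) hu)
  have h2 := hg hu (mem_Ici.2 (by linarith)) (by linarith : u ≤ t + ε)
  have h3 := hg h0 ht (max_le (by linarith) ht)
  have h4 := hg ht (mem_Ici.2 (by linarith)) (by linarith : t ≤ t + ε)
  linarith

end PointsOfIncrease

section DyadicGrid

noncomputable def dyadicNum (a b : ℝ) (n : ℕ) : ℕ := ⌊(b - a) * 2 ^ n⌋₊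

/-- The grid `a, a + 2⁻ⁿ, …, a + dyadicNum a b n / 2ⁿ, b, b, …` of `[a, b]`; its last cell is
usually shorter than `2⁻ⁿ`. -/
noncomputable def dyadicPt (a b : ℝ) (n k : ℕ) : ℝ := min (a + k / 2 ^ n) b

noncomputable def incCells (g : ℝ → ℝ) (a b : ℝ) (n : ℕ) : Finset ℕ :=
  (Finset.range (dyadicNum a b n + 1)).filter
    fun k => g (dyadicPt a b n k) < g (dyadicPt a b n (k + 1))

variable {g : ℝ → ℝ} {a b t : ℝ} {n k : ℕ}

theorem dyadicPt_le : dyadicPt a b n k ≤ b := min_le_right _ _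

theorem le_dyadicPt (hab : a ≤ b) : a ≤ dyadicPt a b n k :=
  le_min (le_add_of_nonneg_right (by positivity)) hab

theorem dyadicPt_mono : Monotone (dyadicPt a b n) := fun k k' hk => by
  unfold dyadicPt
  gcongr

theorem dyadicPt_of_le (hab : a ≤ b) (hk : k ≤ dyadicNum a b n) :
    dyadicPt a b n k = a + k / 2 ^ n := by
  refine min_eq_left ?_
  have : (k : ℝ) ≤ (b - a) * 2 ^ n :=
    (Nat.cast_le.2 hk).trans (Nat.floor_le (by have := sub_nonneg.2 hab; positivity))
  have : (k : ℝ) / 2 ^ n ≤ b - a := by rwa [div_le_iff₀ (by positivity)]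
  linarith

theorem dyadicPt_of_lt (hk : dyadicNum a b n < k) : dyadicPt a b n k = b := by
  refine min_eq_right ?_
  have hk' : ((dyadicNum a b n + 1 : ℕ) : ℝ) ≤ k := Nat.cast_le.2 hk
  push_cast at hk'
  have : (b - a) * 2 ^ n < k := (Nat.lt_floor_add_one _).trans_le hk'
  have : b - a < k / 2 ^ n := by rwa [lt_div_iff₀ (by positivity)]
  linarith

theorem dyadicPt_succ_two_mul : dyadicPt a b (n + 1) (2 * k) = dyadicPt a b n k := by
  simp only [dyadicPt, pow_succ]
  push_cast
  rw [mul_comm (2 : ℝ) k, mul_div_mul_right _ _ two_ne_zero]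

theorem dyadicPt_floor_le (ht : a ≤ t) : dyadicPt a b n ⌊(t - a) * 2 ^ n⌋₊ ≤ t := by
  have : (⌊(t - a) * 2 ^ n⌋₊ : ℝ) / 2 ^ n ≤ t - a := by
    rw [div_le_iff₀ (by positivity)]
    exact Nat.floor_le (by have := sub_nonneg.2 ht; positivity)
  exact (min_le_left _ _).trans (by linarith)

theorem lt_dyadicPt_floor_succ (htb : t < b) :
    t < dyadicPt a b n (⌊(t - a) * 2 ^ n⌋₊ + 1) := by
  have : t - a < ((⌊(t - a) * 2 ^ n⌋₊ + 1 : ℕ) : ℝ) / 2 ^ n := by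
    rw [lt_div_iff₀ (by positivity)]
    exact_mod_cast Nat.lt_floor_add_one _
  exact lt_min (by linarith) htb

theorem sum_range_dyadicPt_sub (hab : a ≤ b) (f : ℝ → ℝ) :
    ∑ k ∈ Finset.range (dyadicNum a b n + 1), f (dyadicPt a b n (k + 1) - dyadicPt a b n k)
      = dyadicNum a b n * f (2 ^ n)⁻¹ + f (b - a - dyadicNum a b n / 2 ^ n) := by
  have hcell : ∀ k ∈ Finset.range (dyadicNum a b n),
      f (dyadicPt a b n (k + 1) - dyadicPt a b n k) = f (2 ^ n)⁻¹ := fun k hk => by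
    rw [Finset.mem_range] at hk
    rw [dyadicPt_of_le hab hk, dyadicPt_of_le hab hk.le]
    congr 1
    push_cast
    ring
  rw [Finset.sum_range_succ, Finset.sum_congr rfl hcell, Finset.sum_const, Finset.card_range,
    nsmul_eq_mul, dyadicPt_of_lt (Nat.lt_succ_self _), dyadicPt_of_le hab le_rfl]
  ring_nf

theorem mem_incCells :
    k ∈ incCells g a b n ↔ g (dyadicPt a b n k) < g (dyadicPt a b n (k + 1)) := by
  refine ⟨fun hk => (Finset.mem_filter.1 hk).2, fun hk => Finset.mem_filter.2 ⟨?_, hk⟩⟩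
  by_contra hK
  rw [Finset.mem_range, not_lt] at hK
  rw [dyadicPt_of_lt hK, dyadicPt_of_lt (by omega)] at hk
  exact lt_irrefl _ hk

end DyadicGrid

section Counting

def jumpSet (g : ℝ → ℝ) (a b : ℝ) : Set ℝ := {t | t ∈ Icc a b ∧ PtInc g t}

variable {g : ℝ → ℝ} {a b t : ℝ} {n : ℕ}

theorem exists_finset_forall_eq_of_finite_jumpSet (hg : MonotoneOn g (Ici 0)) (ha : 0 ≤ a)
    (hJ : (jumpSet g a b).Finite) :
    ∃ s : Finset ℝ, ∀ t ∈ Icc a b, t ∉ s →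
      ∃ ε, 0 < ε ∧ ∀ u ∈ Icc a b, |u - t| < ε → g u = g t := by
  refine ⟨hJ.toFinset, fun t ht hts => ?_⟩
  obtain ⟨ε, hε, h⟩ := exists_forall_eq_of_not_ptInc hg (ha.trans ht.1)
    fun hinc => hts (hJ.mem_toFinset.2 ⟨ht, hinc⟩)
  exact ⟨ε, hε, fun u hu => h u (ha.trans hu.1)⟩

/-- A cell with an increase splits into two halves, one of which has an increase. -/
theorem card_incCells_le_succ (n : ℕ) :
    (incCells g a b n).card ≤ (incCells g a b (n + 1)).card := by
  let x := dyadicPt a b (n + 1)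
  let half : ℕ → ℕ := fun k => if g (x (2 * k)) < g (x (2 * k + 1)) then 2 * k else 2 * k + 1
  have half_div : ∀ k, half k / 2 = k := fun k => by simp only [half]; split_ifs <;> omega
  refine Finset.card_le_card_of_injOn half (fun k hk => ?_) fun k _ k' _ h => ?_
  · rw [Finset.mem_coe, mem_incCells] at hk ⊢
    rw [← dyadicPt_succ_two_mul, ← dyadicPt_succ_two_mul (k := k + 1),
      show 2 * (k + 1) = 2 * k + 1 + 1 by ring] at hk
    simp only [half]
    split_ifs with hlt
    · exact hlt
    · exact (not_lt.1 hlt).trans_lt hk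
  · rw [← half_div k, ← half_div k', h]

theorem mem_Ioo_dyadicPt_floor (ht : t ∈ Icc a b) (hgrid : ∀ k, t ≠ dyadicPt a b n k) :
    t ∈ Ioo (dyadicPt a b n ⌊(t - a) * 2 ^ n⌋₊) (dyadicPt a b n (⌊(t - a) * 2 ^ n⌋₊ + 1)) := by
  refine ⟨(dyadicPt_floor_le ht.1).lt_of_ne (hgrid _).symm, lt_dyadicPt_floor_succ ?_⟩
  refine ht.2.lt_of_ne fun htb => hgrid (dyadicNum a b n + 1) ?_
  rw [dyadicPt_of_lt (Nat.lt_succ_self _), htb]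

theorem floor_mem_incCells (hg : MonotoneOn g (Ici 0)) (ha : 0 ≤ a) (hab : a ≤ b)
    (ht : t ∈ jumpSet g a b) (hgrid : ∀ k, ¬ PtInc g (dyadicPt a b n k)) :
    ⌊(t - a) * 2 ^ n⌋₊ ∈ incCells g a b n :=
  mem_incCells.2 (ht.2.lt_of_mem_Ioo hg (ha.trans (le_dyadicPt hab))
    (mem_Ioo_dyadicPt_floor ht.1 fun k h => hgrid k (h ▸ ht.2)))

/-- Each cell with an increase contains a point of increase in its interior. -/
theorem card_incCells_le_encard (hg : MonotoneOn g (Ici 0)) (ha : 0 ≤ a) (hab : a ≤ b)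
    (hgrid : ∀ k, ¬ PtInc g (dyadicPt a b n k)) :
    ((incCells g a b n).card : ℕ∞) ≤ (jumpSet g a b).encard := by
  let x := dyadicPt a b n
  have hjump : ∀ k ∈ incCells g a b n, ∃ t ∈ Ioo (x k) (x (k + 1)), PtInc g t := by
    intro k hk
    obtain ⟨t, ht, hinc⟩ := exists_ptInc_mem_Icc hg (ha.trans (le_dyadicPt hab))
      (dyadicPt_mono k.le_succ) (mem_incCells.1 hk)
    exact ⟨t, ⟨ht.1.lt_of_ne fun h => hgrid k (h ▸ hinc),
      ht.2.lt_of_ne fun h => hgrid (k + 1) (h ▸ hinc)⟩, hinc⟩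
  choose! ψ hψ hψinc using hjump
  rw [← Set.encard_coe_eq_coe_finsetCard]
  refine Set.encard_le_encard_of_injOn (fun k hk => ⟨⟨?_, ?_⟩, hψinc k hk⟩)
    (StrictMonoOn.injOn fun k hk k' hk' hkk' => ?_)
  · exact (le_dyadicPt hab).trans (hψ k hk).1.le
  · exact (hψ k hk).2.le.trans dyadicPt_le
  · exact (hψ k hk).2.trans ((dyadicPt_mono hkk').trans_lt (hψ k' hk').1)

/-- Once `2⁻ⁿ` is below the gaps of `T`, distinct points of `T` lie in distinct cells. -/
theorem exists_card_le_card_incCells (hg : MonotoneOn g (Ici 0)) (ha : 0 ≤ a) (hab : a ≤ b)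
    (hgrid : ∀ n k, ¬ PtInc g (dyadicPt a b n k)) (T : Finset ℝ) (hT : ↑T ⊆ jumpSet g a b) :
    ∃ n, T.card ≤ (incCells g a b n).card := by
  have hsep : ∀ᶠ n : ℕ in atTop, ∀ t ∈ T, ∀ t' ∈ T, t ≠ t' → 1 < |t - t'| * 2 ^ n := by
    refine (Finset.eventually_all T).2 fun t _ => (Finset.eventually_all T).2 fun t' _ => ?_
    by_cases htt : t = t'
    · exact Eventually.of_forall fun _ h => absurd htt h
    · exact ((tendsto_pow_atTop_atTop_of_one_lt one_lt_two).const_mul_atTop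
        (abs_pos.2 (sub_ne_zero.2 htt))).eventually_gt_atTop 1 |>.mono fun _ h _ => h
  obtain ⟨n, hn⟩ := hsep.exists
  refine ⟨n, Finset.card_le_card_of_injOn (fun t => ⌊(t - a) * 2 ^ n⌋₊)
    (fun t ht => floor_mem_incCells hg ha hab (hT ht) (hgrid n)) fun t ht t' ht' h => ?_⟩
  by_contra hne
  have hx : 0 ≤ (t - a) * 2 ^ n := mul_nonneg (sub_nonneg.2 (hT ht).1.1) (by positivity)
  have hx' : 0 ≤ (t' - a) * 2 ^ n := mul_nonneg (sub_nonneg.2 (hT ht').1.1) (by positivity)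
  have h₁ := Nat.floor_le hx
  have h₂ := Nat.lt_floor_add_one ((t - a) * 2 ^ n)
  have h₃ := Nat.floor_le hx'
  have h₄ := Nat.lt_floor_add_one ((t' - a) * 2 ^ n)
  simp only at h
  rw [h] at h₁ h₂
  have hlt : |t - t'| * 2 ^ n < 1 := by
    rw [← abs_of_pos (by positivity : (0 : ℝ) < 2 ^ n), ← abs_mul,
      show (t - t') * 2 ^ n = (t - a) * 2 ^ n - (t' - a) * 2 ^ n by ring, abs_sub_lt_iff]
    constructor <;> linarith
  exact (hn t ht t' ht' hne).not_gt hlt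

theorem iSup_card_incCells (hg : MonotoneOn g (Ici 0)) (ha : 0 ≤ a) (hab : a ≤ b)
    (hgrid : ∀ n k, ¬ PtInc g (dyadicPt a b n k)) :
    ⨆ n, ((incCells g a b n).card : ℕ∞) = (jumpSet g a b).encard := by
  refine le_antisymm (iSup_le fun n => card_incCells_le_encard hg ha hab (hgrid n)) ?_
  refine ENat.forall_natCast_le_iff_le.1 fun m hm => ?_
  obtain ⟨T, hTJ, hTm⟩ := Set.exists_subset_encard_eq hm
  have hT : T.Finite := Set.encard_lt_top_iff.1 (hTm ▸ ENat.natCast_lt_top m)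
  obtain ⟨n, hn⟩ := exists_card_le_card_incCells hg ha hab hgrid hT.toFinset (by simpa using hTJ)
  rw [← hTm, hT.encard_eq_coe_toFinset_card]
  exact (Nat.cast_le.2 hn).trans (le_iSup (fun n => ((incCells g a b n).card : ℕ∞)) n)

end Counting

section DyadicLimits

variable {f : ℝ → ℝ} {r : ℝ}

theorem floor_mul_two_pow_div_le (hr : 0 ≤ r) (n : ℕ) : (⌊r * 2 ^ n⌋₊ : ℝ) / 2 ^ n ≤ r := by
  rw [div_le_iff₀ (by positivity)]
  exact Nat.floor_le (by positivity)

theorem sub_floor_mul_two_pow_div_le (n : ℕ) : r - ⌊r * 2 ^ n⌋₊ / 2 ^ n ≤ (2 ^ n)⁻¹ := by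
  have : r * 2 ^ n < ⌊r * 2 ^ n⌋₊ + 1 := Nat.lt_floor_add_one _
  have : r < (⌊r * 2 ^ n⌋₊ + 1) / 2 ^ n := by rwa [lt_div_iff₀ (by positivity)]
  rw [add_div, one_div] at this
  linarith

theorem tendsto_apply_inv_two_pow_of_two_pow_mul {ℓ : ℝ}
    (hℓ : Tendsto (fun n : ℕ => 2 ^ n * f (2 ^ n)⁻¹) atTop (𝓝 ℓ)) :
    Tendsto (fun n : ℕ => f (2 ^ n)⁻¹) atTop (𝓝 0) := by
  have := hℓ.mul (tendsto_pow_atTop_atTop_of_one_lt (one_lt_two (α := ℝ))).inv_tendsto_atTop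
  rw [mul_zero] at this
  refine this.congr fun n => ?_
  simp only [Pi.inv_apply]
  field_simp

/-- The remainder term is squeezed between `f 0` and `f 2⁻ⁿ → 0`. -/
theorem tendsto_floor_mul_add_sub (hr : 0 ≤ r) (hf : MonotoneOn f (Ici 0)) (hf0 : 0 ≤ f 0)
    {ℓ : ℝ} (hℓ : Tendsto (fun n : ℕ => 2 ^ n * f (2 ^ n)⁻¹) atTop (𝓝 ℓ)) :
    Tendsto (fun n : ℕ => ⌊r * 2 ^ n⌋₊ * f (2 ^ n)⁻¹ + f (r - ⌊r * 2 ^ n⌋₊ / 2 ^ n)) atTop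
      (𝓝 (r * ℓ)) := by
  have hfloor : Tendsto (fun n : ℕ => (⌊r * 2 ^ n⌋₊ : ℝ) / 2 ^ n) atTop (𝓝 r) :=
    (tendsto_nat_floor_mul_div_atTop hr).comp (tendsto_pow_atTop_atTop_of_one_lt one_lt_two)
  have hrem : Tendsto (fun n : ℕ => f (r - ⌊r * 2 ^ n⌋₊ / 2 ^ n)) atTop (𝓝 0) := by
    have hnonneg : ∀ n : ℕ, 0 ≤ r - ⌊r * 2 ^ n⌋₊ / 2 ^ n :=
      fun n => sub_nonneg.2 (floor_mul_two_pow_div_le hr n)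
    refine squeeze_zero (fun n => hf0.trans (hf self_mem_Ici (hnonneg n) (hnonneg n)))
      (fun n => hf (hnonneg n) (mem_Ici.2 (by positivity)) (sub_floor_mul_two_pow_div_le n))
      (tendsto_apply_inv_two_pow_of_two_pow_mul hℓ)
  have := (hfloor.mul hℓ).add hrem
  rw [add_zero] at this
  refine this.congr fun n => ?_
  field_simp

theorem eq_mul_of_add_of_monotoneOn (hadd : ∀ s t, 0 ≤ s → 0 ≤ t → f (s + t) = f s + f t)
    (hf : MonotoneOn f (Ici 0)) (hr : 0 ≤ r) : f r = r * f 1 := by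
  have h0 : f 0 = 0 := by simpa using hadd 0 0 le_rfl le_rfl
  have hnat : ∀ (k : ℕ) {x : ℝ}, 0 ≤ x → f (k * x) = k * f x := by
    intro k x hx
    induction k with
    | zero => simp [h0]
    | succ k ih => rw [Nat.cast_succ, add_mul, one_mul, hadd _ _ (by positivity) hx, ih]; ring
  have hdyad : ∀ n : ℕ, 2 ^ n * f (2 ^ n)⁻¹ = f 1 := fun n => by
    have := hnat (2 ^ n) (inv_nonneg.2 (pow_nonneg zero_le_two n))
    push_cast at this
    rw [← this, mul_inv_cancel₀ (by positivity)]
  have hsplit : ∀ n : ℕ, ⌊r * 2 ^ n⌋₊ * f (2 ^ n)⁻¹ + f (r - ⌊r * 2 ^ n⌋₊ / 2 ^ n) = f r := by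
    intro n
    rw [← hnat _ (by positivity), ← hadd _ _ (by positivity)
      (sub_nonneg.2 (floor_mul_two_pow_div_le hr n)), div_eq_mul_inv, add_sub_cancel]
  have := tendsto_floor_mul_add_sub hr hf h0.ge (tendsto_const_nhds.congr fun n => (hdyad n).symm)
  exact tendsto_nhds_unique (tendsto_const_nhds.congr fun n => (hsplit n).symm) this

/-- `Λ n` is eventually positive because `μ / 0 = 0`, hence bounded by `μ / δ`. -/
theorem Monotone.exists_tendsto_of_eventually_lt_div {Λ : ℕ → ℝ} {μ δ : ℝ} (hΛ : Monotone Λ)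
    (hΛ0 : ∀ n, 0 ≤ Λ n) (hδ : 0 < δ) (h : ∀ᶠ n in atTop, δ < μ / Λ n) :
    0 < μ ∧ ∃ ρ, 0 < ρ ∧ Tendsto Λ atTop (𝓝 ρ) := by
  obtain ⟨N, hN⟩ := eventually_atTop.1 h
  have hpos : ∀ n, N ≤ n → 0 < Λ n := fun n hn => (hΛ0 n).lt_of_ne fun h0 => by
    have := hN n hn
    rw [← h0, div_zero] at this
    linarith
  have hμ : 0 < μ := by
    have := hN N le_rfl
    rw [lt_div_iff₀ (hpos N le_rfl)] at this
    nlinarith [hpos N le_rfl]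
  have hbdd : BddAbove (range Λ) := by
    refine ⟨μ / δ, forall_mem_range.2 fun n => (hΛ (le_max_left n N)).trans ?_⟩
    have := hN _ (le_max_right n N)
    rw [lt_div_iff₀ (hpos _ (le_max_right n N))] at this
    rw [le_div_iff₀ hδ]
    linarith
  exact ⟨hμ, ⨆ n, Λ n, (hpos N le_rfl).trans_le (le_ciSup hbdd N),
    tendsto_atTop_ciSup hΛ hbdd⟩

end DyadicLimits

section Increments

variable {Ω : Type*} [MeasurableSpace Ω]

def HasStationaryIncrements (P : Measure Ω) (Y : ℝ → Ω → ℝ) : Prop :=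
  ∀ h : ℝ, 0 ≤ h →
    Measure.map (fun ω => fun t : {t : ℝ // 0 ≤ t} => Y ((t : ℝ) + h) ω - Y h ω) P
      = Measure.map (fun ω => fun t : {t : ℝ // 0 ≤ t} => Y (t : ℝ) ω - Y 0 ω) P

noncomputable def incrProb (P : Measure Ω) (Y : ℝ → Ω → ℝ) (s : ℝ) : ℝ :=
  P.real {ω | Y 0 ω < Y s ω}

noncomputable def meanIncr (P : Measure Ω) (Y : ℝ → Ω → ℝ) (s : ℝ) : ℝ :=
  ∫ ω, (Y s ω - Y 0 ω) ∂P

/-- `E[Y s - Y 0 | Y s > Y 0]`, with the junk value `0` when `P (Y s > Y 0) = 0`. -/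
noncomputable def condMeanIncr (P : Measure Ω) (Y : ℝ → Ω → ℝ) (s : ℝ) : ℝ :=
  (∫ ω in {ω | Y 0 ω < Y s ω}, (Y s ω - Y 0 ω) ∂P) / (P {ω | Y 0 ω < Y s ω}).toReal

noncomputable def dyadicRate (P : Measure Ω) (Y : ℝ → Ω → ℝ) (n : ℕ) : ℝ :=
  2 ^ n * incrProb P Y (2 ^ n)⁻¹

variable {P : Measure Ω} {Y : ℝ → Ω → ℝ} {s t u v : ℝ}

theorem identDistrib_sub (hmeas : ∀ t, Measurable (Y t)) (hstat : HasStationaryIncrements P Y)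
    (hu : 0 ≤ u) (huv : u ≤ v) :
    IdentDistrib (fun ω => Y v ω - Y u ω) (fun ω => Y (v - u) ω - Y 0 ω) P P := by
  have hpath : ∀ h, Measurable fun ω => fun t : {t : ℝ // 0 ≤ t} => Y ((t : ℝ) + h) ω - Y h ω :=
    fun h => measurable_pi_iff.2 fun t => (hmeas _).sub (hmeas _)
  have hpath₀ : Measurable fun ω => fun t : {t : ℝ // 0 ≤ t} => Y (t : ℝ) ω - Y 0 ω :=
    measurable_pi_iff.2 fun t => (hmeas _).sub (hmeas _)
  have := (IdentDistrib.mk (hpath u).aemeasurable hpath₀.aemeasurable (hstat u hu)).comp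
    (measurable_pi_apply ⟨v - u, sub_nonneg.2 huv⟩)
  simpa [Function.comp_def] using this

theorem measureReal_lt_eq_incrProb (hmeas : ∀ t, Measurable (Y t))
    (hstat : HasStationaryIncrements P Y) (hu : 0 ≤ u) (huv : u ≤ v) :
    P.real {ω | Y u ω < Y v ω} = incrProb P Y (v - u) := by
  have := (identDistrib_sub hmeas hstat hu huv).measure_mem_eq (measurableSet_Ioi (a := 0))
  simp only [preimage, mem_Ioi, sub_pos] at this
  rw [incrProb, measureReal_def, measureReal_def, this]

theorem incrProb_zero : incrProb P Y 0 = 0 := by simp [incrProb]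

theorem incrProb_nonneg : 0 ≤ incrProb P Y s := measureReal_nonneg

theorem incrProb_mono [IsFiniteMeasure P] (hmono : ∀ ω, MonotoneOn (fun t => Y t ω) (Ici 0)) :
    MonotoneOn (incrProb P Y) (Ici 0) := fun s hs t ht hst =>
  measureReal_mono fun ω hω => hω.trans_le (hmono ω hs ht hst)

/-- `{Y 0 < Y (2s)} ⊆ {Y 0 < Y s} ∪ {Y s < Y (2s)}`, and both events have probability
`incrProb P Y s`. -/
theorem incrProb_two_mul_le [IsFiniteMeasure P] (hmeas : ∀ t, Measurable (Y t))
    (hstat : HasStationaryIncrements P Y) (hs : 0 ≤ s) :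
    incrProb P Y (2 * s) ≤ 2 * incrProb P Y s := by
  calc incrProb P Y (2 * s)
      ≤ P.real ({ω | Y 0 ω < Y s ω} ∪ {ω | Y s ω < Y (2 * s) ω}) :=
        measureReal_mono fun ω (hω : Y 0 ω < Y (2 * s) ω) => by
          by_contra h
          simp only [mem_union, mem_ofPred_eq, not_or, not_lt] at h
          exact hω.not_ge (h.2.trans h.1)
    _ ≤ P.real {ω | Y 0 ω < Y s ω} + P.real {ω | Y s ω < Y (2 * s) ω} := measureReal_union_le _ _
    _ = 2 * incrProb P Y s := by
        rw [measureReal_lt_eq_incrProb hmeas hstat hs (by linarith), two_mul s,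
          add_sub_cancel_right, incrProb]
        ring

theorem dyadicRate_nonneg (n : ℕ) : 0 ≤ dyadicRate P Y n :=
  mul_nonneg (by positivity) incrProb_nonneg

theorem dyadicRate_mono [IsFiniteMeasure P] (hmeas : ∀ t, Measurable (Y t))
    (hstat : HasStationaryIncrements P Y) : Monotone (dyadicRate P Y) := by
  refine monotone_nat_of_le_succ fun n => ?_
  have h := incrProb_two_mul_le hmeas hstat (s := (2 ^ (n + 1))⁻¹) (by positivity)
  rw [show (2 : ℝ) * (2 ^ (n + 1))⁻¹ = (2 ^ n)⁻¹ by rw [pow_succ]; field_simp] at h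
  calc dyadicRate P Y n ≤ 2 ^ n * (2 * incrProb P Y (2 ^ (n + 1))⁻¹) :=
        mul_le_mul_of_nonneg_left h (by positivity)
    _ = dyadicRate P Y (n + 1) := by rw [dyadicRate, pow_succ]; ring

theorem integrable_sub (hmeas : ∀ t, Measurable (Y t))
    (hmono : ∀ ω, MonotoneOn (fun t => Y t ω) (Ici 0))
    (hfin : ∀ a b : ℝ, 0 ≤ a → a < b → ∫⁻ ω, ENNReal.ofReal (Y b ω - Y a ω) ∂P < ⊤)
    (hu : 0 ≤ u) (huv : u ≤ v) : Integrable (fun ω => Y v ω - Y u ω) P := by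
  rcases huv.eq_or_lt with rfl | hlt
  · simp
  refine (lintegral_ofReal_ne_top_iff_integrable ((hmeas v).sub (hmeas u)).aestronglyMeasurable
    (ae_of_all _ fun ω => sub_nonneg.2 (hmono ω hu (hu.trans huv) huv))).1 (hfin u v hu hlt).ne

theorem integral_sub_eq_meanIncr (hmeas : ∀ t, Measurable (Y t))
    (hstat : HasStationaryIncrements P Y) (hu : 0 ≤ u) (huv : u ≤ v) :
    ∫ ω, (Y v ω - Y u ω) ∂P = meanIncr P Y (v - u) :=
  (identDistrib_sub hmeas hstat hu huv).integral_eq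

theorem meanIncr_nonneg (hmono : ∀ ω, MonotoneOn (fun t => Y t ω) (Ici 0)) (hs : 0 ≤ s) :
    0 ≤ meanIncr P Y s :=
  integral_nonneg fun ω => sub_nonneg.2 (hmono ω self_mem_Ici hs hs)

theorem meanIncr_add (hmeas : ∀ t, Measurable (Y t))
    (hmono : ∀ ω, MonotoneOn (fun t => Y t ω) (Ici 0)) (hstat : HasStationaryIncrements P Y)
    (hfin : ∀ a b : ℝ, 0 ≤ a → a < b → ∫⁻ ω, ENNReal.ofReal (Y b ω - Y a ω) ∂P < ⊤)
    (hs : 0 ≤ s) (ht : 0 ≤ t) : meanIncr P Y (s + t) = meanIncr P Y s + meanIncr P Y t := by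
  have hst : t ≤ s + t := by linarith
  have hsplit : (fun ω => Y (s + t) ω - Y 0 ω)
      = fun ω => (Y (s + t) ω - Y t ω) + (Y t ω - Y 0 ω) := by ext; ring
  rw [meanIncr, hsplit, integral_add (integrable_sub hmeas hmono hfin ht hst)
    (integrable_sub hmeas hmono hfin le_rfl ht), integral_sub_eq_meanIncr hmeas hstat ht hst,
    add_sub_cancel_right]
  rfl

theorem meanIncr_eq_mul (hmeas : ∀ t, Measurable (Y t))
    (hmono : ∀ ω, MonotoneOn (fun t => Y t ω) (Ici 0)) (hstat : HasStationaryIncrements P Y)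
    (hfin : ∀ a b : ℝ, 0 ≤ a → a < b → ∫⁻ ω, ENNReal.ofReal (Y b ω - Y a ω) ∂P < ⊤)
    (hs : 0 ≤ s) : meanIncr P Y s = s * meanIncr P Y 1 := by
  refine eq_mul_of_add_of_monotoneOn (fun s t hs ht => meanIncr_add hmeas hmono hstat hfin hs ht)
    (fun s hs t ht hst => ?_) hs
  rw [← add_sub_cancel s t, meanIncr_add hmeas hmono hstat hfin hs (sub_nonneg.2 hst)]
  exact le_add_of_nonneg_right (meanIncr_nonneg hmono (sub_nonneg.2 hst))

theorem condMeanIncr_eq (hmono : ∀ ω, MonotoneOn (fun t => Y t ω) (Ici 0)) (hs : 0 ≤ s) :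
    condMeanIncr P Y s = meanIncr P Y s / incrProb P Y s := by
  rw [condMeanIncr, setIntegral_eq_integral_of_forall_compl_eq_zero fun ω hω => ?_]
  · rfl
  exact sub_eq_zero.2 (le_antisymm (not_lt.1 hω) (hmono ω self_mem_Ici hs hs))

theorem condMeanIncr_inv_two_pow (hmeas : ∀ t, Measurable (Y t))
    (hmono : ∀ ω, MonotoneOn (fun t => Y t ω) (Ici 0)) (hstat : HasStationaryIncrements P Y)
    (hfin : ∀ a b : ℝ, 0 ≤ a → a < b → ∫⁻ ω, ENNReal.ofReal (Y b ω - Y a ω) ∂P < ⊤) (n : ℕ) :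
    condMeanIncr P Y (2 ^ n)⁻¹ = meanIncr P Y 1 / dyadicRate P Y n := by
  rw [condMeanIncr_eq hmono (by positivity), meanIncr_eq_mul hmeas hmono hstat hfin (by positivity),
    dyadicRate, inv_mul_eq_div, div_div]

theorem exists_pos_eventually_lt_condMeanIncr
    (hmono : ∀ ω, MonotoneOn (fun t => Y t ω) (Ici 0))
    (hliminf : 0 < liminf (condMeanIncr P Y) (𝓝[>] 0)) :
    ∃ δ, 0 < δ ∧ ∀ᶠ n : ℕ in atTop, δ < condMeanIncr P Y (2 ^ n)⁻¹ := by
  have hbdd : IsBoundedUnder (· ≥ ·) (𝓝[>] 0) (condMeanIncr P Y) :=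
    isBoundedUnder_of_eventually_ge (eventually_nhdsWithin_of_forall fun s (hs : 0 < s) => by
      rw [condMeanIncr_eq hmono hs.le]
      exact div_nonneg (meanIncr_nonneg hmono hs.le) measureReal_nonneg)
  refine ⟨_, half_pos hliminf, ?_⟩
  exact tendsto_inv_atTop_nhdsGT_zero.comp (tendsto_pow_atTop_atTop_of_one_lt one_lt_two)
    |>.eventually (eventually_lt_of_lt_liminf (half_lt_self hliminf) hbdd)

end Increments

section Jumps

variable {Ω : Type*} [MeasurableSpace Ω] {P : Measure Ω} [IsFiniteMeasure P] {Y : ℝ → Ω → ℝ}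
  {a b ρ : ℝ}

/-- A jump at `t` forces an increase over `[t - 2⁻ⁿ⁻¹, t + 2⁻ⁿ⁻¹]`, of probability at most
`incrProb P Y 2⁻ⁿ = dyadicRate P Y n / 2ⁿ → 0`. -/
theorem measure_ptInc_eq_zero (hmeas : ∀ t, Measurable (Y t))
    (hmono : ∀ ω, MonotoneOn (fun t => Y t ω) (Ici 0)) (hstat : HasStationaryIncrements P Y)
    (hρ : Tendsto (dyadicRate P Y) atTop (𝓝 ρ)) {t : ℝ} (ht : 0 ≤ t) :
    P {ω | PtInc (fun u => Y u ω) t} = 0 := by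
  have hq : Tendsto (fun n : ℕ => incrProb P Y (2 ^ n)⁻¹) atTop (𝓝 0) :=
    tendsto_apply_inv_two_pow_of_two_pow_mul hρ
  have hle : ∀ n : ℕ, P.real {ω | PtInc (fun u => Y u ω) t} ≤ incrProb P Y (2 ^ n)⁻¹ := by
    intro n
    set ε : ℝ := (2 ^ (n + 1))⁻¹ with hε_def
    have hε : 0 < ε := by positivity
    have h2ε : 2 * ε = (2 ^ n)⁻¹ := by rw [hε_def, pow_succ]; field_simp
    have hmax : max (t - ε) 0 ≤ t + ε := max_le (by linarith) (by linarith)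
    have hlen : t + ε - max (t - ε) 0 ≤ (2 ^ n)⁻¹ := by linarith [le_max_left (t - ε) 0]
    calc P.real {ω | PtInc (fun u => Y u ω) t}
        ≤ P.real {ω | Y (max (t - ε) 0) ω < Y (t + ε) ω} := measureReal_mono fun ω hω => hω ε hε
      _ = incrProb P Y (t + ε - max (t - ε) 0) :=
          measureReal_lt_eq_incrProb hmeas hstat (le_max_right _ _) hmax
      _ ≤ incrProb P Y (2 ^ n)⁻¹ :=
          incrProb_mono hmono (sub_nonneg.2 hmax) (mem_Ici.2 (by positivity)) hlen
  exact (measureReal_eq_zero_iff).1 (le_antisymm (ge_of_tendsto' hq hle) measureReal_nonneg)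

theorem measurable_card_incCells (hmeas : ∀ t, Measurable (Y t)) (n : ℕ) :
    Measurable fun ω => ((incCells (fun u => Y u ω) a b n).card : ℝ≥0∞) := by
  simp only [incCells, Finset.card_filter, Nat.cast_sum, Nat.cast_ite, Nat.cast_one, Nat.cast_zero]
  exact Finset.measurable_sum _ fun k _ =>
    Measurable.ite (measurableSet_lt (hmeas _) (hmeas _)) measurable_const measurable_const

theorem lintegral_card_incCells (hmeas : ∀ t, Measurable (Y t))
    (hstat : HasStationaryIncrements P Y) (ha : 0 ≤ a) (hab : a ≤ b) (n : ℕ) :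
    ∫⁻ ω, ((incCells (fun u => Y u ω) a b n).card : ℝ≥0∞) ∂P = ENNReal.ofReal
      (dyadicNum a b n * incrProb P Y (2 ^ n)⁻¹
        + incrProb P Y (b - a - dyadicNum a b n / 2 ^ n)) := by
  simp only [incCells, Finset.card_filter, Nat.cast_sum, Nat.cast_ite, Nat.cast_one, Nat.cast_zero]
  rw [lintegral_finsetSum _ fun k _ =>
      Measurable.ite (measurableSet_lt (hmeas _) (hmeas _)) measurable_const measurable_const,
    ← sum_range_dyadicPt_sub hab, ENNReal.ofReal_sum_of_nonneg fun k _ => incrProb_nonneg]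
  refine Finset.sum_congr rfl fun k _ => ?_
  rw [← measureReal_lt_eq_incrProb hmeas hstat (ha.trans (le_dyadicPt hab))
    (dyadicPt_mono k.le_succ), ofReal_measureReal, ← lintegral_indicator_one
    (measurableSet_lt (hmeas _) (hmeas _))]
  rfl

theorem tendsto_lintegral_card_incCells (hmeas : ∀ t, Measurable (Y t))
    (hmono : ∀ ω, MonotoneOn (fun t => Y t ω) (Ici 0)) (hstat : HasStationaryIncrements P Y)
    (hρ : Tendsto (dyadicRate P Y) atTop (𝓝 ρ)) (ha : 0 ≤ a) (hab : a ≤ b) :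
    Tendsto (fun n => ∫⁻ ω, ((incCells (fun u => Y u ω) a b n).card : ℝ≥0∞) ∂P) atTop
      (𝓝 (ENNReal.ofReal ((b - a) * ρ))) := by
  simp_rw [lintegral_card_incCells hmeas hstat ha hab]
  exact (ENNReal.continuous_ofReal.tendsto _).comp (tendsto_floor_mul_add_sub (sub_nonneg.2 hab)
    (incrProb_mono hmono) incrProb_zero.ge hρ)

theorem finite_jumpSet_and_lintegral_ncard (hmeas : ∀ t, Measurable (Y t))
    (hmono : ∀ ω, MonotoneOn (fun t => Y t ω) (Ici 0)) (hstat : HasStationaryIncrements P Y)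
    (hρ : Tendsto (dyadicRate P Y) atTop (𝓝 ρ))
    (hnull : ∀ t, 0 ≤ t → P {ω | PtInc (fun u => Y u ω) t} = 0) (ha : 0 ≤ a) (hab : a ≤ b) :
    (∀ᵐ ω ∂P, (jumpSet (fun u => Y u ω) a b).Finite) ∧
      ∫⁻ ω, ((jumpSet (fun u => Y u ω) a b).ncard : ℝ≥0∞) ∂P = ENNReal.ofReal ((b - a) * ρ) := by
  set N : ℕ → Ω → ℝ≥0∞ := fun n ω => (incCells (fun u => Y u ω) a b n).card
  have hN : Monotone N := monotone_nat_of_le_succ fun n ω => Nat.cast_le.2 (card_incCells_le_succ n)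
  have hint : ∫⁻ ω, ⨆ n, N n ω ∂P = ENNReal.ofReal ((b - a) * ρ) := by
    rw [lintegral_iSup (measurable_card_incCells hmeas) hN]
    exact tendsto_nhds_unique (tendsto_atTop_iSup fun m n h => lintegral_mono (hN h))
      (tendsto_lintegral_card_incCells hmeas hmono hstat hρ ha hab)
  have hgrid : ∀ᵐ ω ∂P, ∀ n k, ¬ PtInc (fun u => Y u ω) (dyadicPt a b n k) := by
    simp only [ae_all_iff]
    exact fun n k => ae_iff.2 (by simpa using hnull _ (ha.trans (le_dyadicPt hab)))
  have hsup : ∀ᵐ ω ∂P, ⨆ n, N n ω = (jumpSet (fun u => Y u ω) a b).encard := by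
    filter_upwards [hgrid] with ω hω
    rw [← iSup_card_incCells (hmono ω) ha hab hω, ENat.toENNReal_iSup]
    simp [N]
  have hfin : ∀ᵐ ω ∂P, (jumpSet (fun u => Y u ω) a b).Finite := by
    filter_upwards [hsup, ae_lt_top (Measurable.iSup (measurable_card_incCells hmeas))
      (hint ▸ ENNReal.ofReal_ne_top)] with ω hω hω'
    rw [hω, ENat.toENNReal_lt_top] at hω'
    exact Set.encard_lt_top_iff.1 hω'
  refine ⟨hfin, hint ▸ lintegral_congr_ae ?_⟩
  filter_upwards [hsup, hfin] with ω hω hω'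
  rw [hω, ← hω'.cast_ncard_eq, ENat.toENNReal_coe]

end Jumps

theorem stmt16_general {Ω : Type*} [MeasurableSpace Ω] (P : Measure Ω) [IsProbabilityMeasure P]
    (Y : ℝ → Ω → ℝ) (hmeas : ∀ t, Measurable (Y t))
    (hmono : ∀ ω, ∀ s t : ℝ, 0 ≤ s → s ≤ t → Y s ω ≤ Y t ω)
    (hstat : ∀ h : ℝ, 0 ≤ h →
      Measure.map (fun ω => fun t : {t : ℝ // 0 ≤ t} => Y ((t : ℝ) + h) ω - Y h ω) P
        = Measure.map (fun ω => fun t : {t : ℝ // 0 ≤ t} => Y (t : ℝ) ω - Y 0 ω) P)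
    (hfin : ∀ a b : ℝ, 0 ≤ a → a < b →
      ∫⁻ ω, ENNReal.ofReal (Y b ω - Y a ω) ∂P < ⊤)
    (c : ℝ → ℝ)
    (hc : ∀ t, c t = (∫ ω in {ω | Y 0 ω < Y t ω}, (Y t ω - Y 0 ω) ∂P)
        / (P {ω | Y 0 ω < Y t ω}).toReal)
    (hliminf : 0 < liminf c (nhdsWithin 0 (Set.Ioi 0))) :
    (∀ᵐ ω ∂P, ∀ a b : ℝ, 0 ≤ a → a < b →
      ∃ s : Finset ℝ, ∀ t ∈ Set.Icc a b, t ∉ s →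
        ∃ ε : ℝ, 0 < ε ∧ ∀ u ∈ Set.Icc a b, |u - t| < ε → Y u ω = Y t ω) ∧
    (∀ t : ℝ, 0 ≤ t → P {ω | PtInc (fun u => Y u ω) t} = 0) ∧
    (∀ a b : ℝ, 0 ≤ a → a < b →
      ∃ L : ℝ, Tendsto (fun n : ℕ => c ((2 : ℝ) ^ (-(n : ℝ)))) atTop (nhds L) ∧
        ∫⁻ ω, (({t | t ∈ Set.Icc a b ∧ PtInc (fun u => Y u ω) t}.ncard : ℝ≥0∞)) ∂P
          = ENNReal.ofReal ((∫ ω, (Y b ω - Y a ω) ∂P) / L)) := by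
  have hmonoOn : ∀ ω, MonotoneOn (fun t => Y t ω) (Ici 0) :=
    fun ω s hs t _ hst => hmono ω s t hs hst
  obtain rfl : c = condMeanIncr P Y := funext hc
  obtain ⟨δ, hδ, hcδ⟩ := exists_pos_eventually_lt_condMeanIncr hmonoOn hliminf
  simp_rw [condMeanIncr_inv_two_pow hmeas hmonoOn hstat hfin] at hcδ
  obtain ⟨hμ, ρ, hρ, hΛ⟩ := (dyadicRate_mono hmeas hstat).exists_tendsto_of_eventually_lt_div
    dyadicRate_nonneg hδ hcδ
  have hnull : ∀ t, 0 ≤ t → P {ω | PtInc (fun u => Y u ω) t} = 0 :=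
    fun t => measure_ptInc_eq_zero hmeas hmonoOn hstat hΛ
  have hjumps := fun a b (ha : 0 ≤ a) (hab : a ≤ b) =>
    finite_jumpSet_and_lintegral_ncard hmeas hmonoOn hstat hΛ hnull ha hab
  refine ⟨?_, hnull, fun a b ha hab => ⟨meanIncr P Y 1 / ρ, ?_, ?_⟩⟩
  · have hfinite : ∀ᵐ ω ∂P, ∀ N : ℕ, (jumpSet (fun u => Y u ω) 0 N).Finite :=
      ae_all_iff.2 fun N => (hjumps 0 N le_rfl N.cast_nonneg).1
    filter_upwards [hfinite] with ω hω a b ha hab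
    exact exists_finset_forall_eq_of_finite_jumpSet (hmonoOn ω) ha ((hω ⌈b⌉₊).subset
      fun t ht => ⟨⟨ha.trans ht.1.1, ht.1.2.trans (Nat.le_ceil b)⟩, ht.2⟩)
  · simp_rw [Real.rpow_neg zero_le_two, Real.rpow_natCast,
      condMeanIncr_inv_two_pow hmeas hmonoOn hstat hfin]
    exact tendsto_const_nhds.div hΛ hρ.ne'
  · refine (hjumps a b ha hab.le).2.trans ?_
    rw [integral_sub_eq_meanIncr hmeas hstat ha hab.le,
      meanIncr_eq_mul hmeas hmonoOn hstat hfin (sub_nonneg.2 hab.le)]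
    field_simp

/-- a nondecreasing, increment-stationary process with finite mean increments,
`P(Y(t) = Y(0)) ∈ (0,1)` for small `t > 0`, and conditional increment sizes bounded away
from `0`, has step-function paths a.s. with finitely many jumps per bounded interval; fixed
times are a.s. not jump points; and the expected number of jumps in `[a,b]` equals
`E[Y(b)-Y(a)] / lim_n E[Y(2^{-n})-Y(0) | Y(2^{-n}) > Y(0)]`. -/
theorem stmt16 {Ω : Type*} [MeasurableSpace Ω] (P : Measure Ω) [IsProbabilityMeasure P]
    (Y : ℝ → Ω → ℝ) (hmeas : ∀ t, Measurable (Y t))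
    (hmono : ∀ ω, ∀ s t : ℝ, 0 ≤ s → s ≤ t → Y s ω ≤ Y t ω)
    (hstat : ∀ h : ℝ, 0 ≤ h →
      Measure.map (fun ω => fun t : {t : ℝ // 0 ≤ t} => Y ((t : ℝ) + h) ω - Y h ω) P
        = Measure.map (fun ω => fun t : {t : ℝ // 0 ≤ t} => Y (t : ℝ) ω - Y 0 ω) P)
    (hfin : ∀ a b : ℝ, 0 ≤ a → a < b →
      ∫⁻ ω, ENNReal.ofReal (Y b ω - Y a ω) ∂P < ⊤)
    (hsmall : ∃ t₀ : ℝ, 0 < t₀ ∧ ∀ t : ℝ, 0 < t → t ≤ t₀ →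
      0 < P {ω | Y t ω = Y 0 ω} ∧ P {ω | Y t ω = Y 0 ω} < 1)
    (c : ℝ → ℝ)
    (hc : ∀ t, c t = (∫ ω in {ω | Y 0 ω < Y t ω}, (Y t ω - Y 0 ω) ∂P)
        / (P {ω | Y 0 ω < Y t ω}).toReal)
    (hliminf : 0 < liminf c (nhdsWithin 0 (Set.Ioi 0))) :
    (∀ᵐ ω ∂P, ∀ a b : ℝ, 0 ≤ a → a < b →
      ∃ s : Finset ℝ, ∀ t ∈ Set.Icc a b, t ∉ s →
        ∃ ε : ℝ, 0 < ε ∧ ∀ u ∈ Set.Icc a b, |u - t| < ε → Y u ω = Y t ω) ∧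
    (∀ t : ℝ, 0 ≤ t → P {ω | PtInc (fun u => Y u ω) t} = 0) ∧
    (∀ a b : ℝ, 0 ≤ a → a < b →
      ∃ L : ℝ, Tendsto (fun n : ℕ => c ((2 : ℝ) ^ (-(n : ℝ)))) atTop (nhds L) ∧
        ∫⁻ ω, (({t | t ∈ Set.Icc a b ∧ PtInc (fun u => Y u ω) t}.ncard : ℝ≥0∞)) ∂P
          = ENNReal.ofReal ((∫ ω, (Y b ω - Y a ω) ∂P) / L)) :=
  stmt16_general P Y hmeas hmono hstat hfin c hc hliminf
end
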